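/- arXiv:1004.1287 — 7 statements merged into one kernel-verified Lean document; each statement's English description precedes it below -/
import Mathlib

section
/- The operators e(v) and e(v)* (v∈V) act irreducibly on the exterior algebra Λ(V) of a complex inner product space V: any subspace invariant under all e(v) and e(v)* is (0) or Λ(V). -/
/-- The wedge product `v₁ ∧ ⋯ ∧ vₘ` of a tuple of vectors in the exterior algebra. -/
noncomputable def wedgeList {V : Type*} [AddCommGroup V] [Module ℂ V] {m : ℕ}
    (a : Fin m → V) : ExteriorAlgebra ℂ V :=
  (List.ofFn fun i => ExteriorAlgebra.ι ℂ (a i)).prod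

/-- Exterior multiplication `e(v)` by a vector, as an endomorphism of `Λ(V)`. -/
noncomputable def eOp {V : Type*} [AddCommGroup V] [Module ℂ V] (v : V) :
    Module.End ℂ (ExteriorAlgebra ℂ V) :=
  LinearMap.mulLeft ℂ (ExteriorAlgebra.ι ℂ v)

/-!
Let `W ≠ 0` be invariant and `x ∈ W` nonzero, with top homogeneous component `xₙ`. By positivity
some wedge `w = b₁ ∧ ⋯ ∧ bₙ` has `⟪w, xₙ⟫ ≠ 0`, and since distinct exterior powers are orthogonal,
`⟪w, x⟫ = ⟪w, xₙ⟫`. By adjointness this is `⟪1, e(bₙ)* ⋯ e(b₁)* x⟫`. Each `e(b)*` lowers the degree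
by one (its components in the other degrees are orthogonal to everything), so
`e(bₙ)* ⋯ e(b₁)* x ∈ W` is a nonzero scalar and `1 ∈ W`. The `e(v)` then generate `Λ(V)` from `1`.
-/

open DirectSum
open ExteriorAlgebra (exteriorPower ι ιMulti)

section

variable {V : Type*} [AddCommGroup V] [Module ℂ V]

theorem wedgeList_eq_ιMulti {m : ℕ} (a : Fin m → V) :
    wedgeList a = ιMulti ℂ m a :=
  (ExteriorAlgebra.ιMulti_apply a).symm

theorem wedgeList_eq_prod_map_ι {m : ℕ} (a : Fin m → V) :
    wedgeList a = ((List.ofFn a).map (ι ℂ)).prod := by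
  rw [List.map_ofFn]
  rfl

theorem wedgeList_mem_exteriorPower {m : ℕ} (a : Fin m → V) : wedgeList a ∈ ⋀[ℂ]^m V :=
  wedgeList_eq_ιMulti a ▸ ExteriorAlgebra.ιMulti_range ℂ m (Set.mem_range_self a)

theorem exteriorPower_le_of_forall_wedgeList_mem {t : ℕ}
    {N : Submodule ℂ (ExteriorAlgebra ℂ V)} (h : ∀ a : Fin t → V, wedgeList a ∈ N) :
    ⋀[ℂ]^t V ≤ N := by
  rw [← ExteriorAlgebra.ιMulti_span_fixedDegree, Submodule.span_le]
  rintro _ ⟨a, rfl⟩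
  exact wedgeList_eq_ιMulti a ▸ h a

theorem eOp_mem_exteriorPower (u : V) {k : ℕ} {x : ExteriorAlgebra ℂ V}
    (hx : x ∈ ⋀[ℂ]^k V) : eOp u x ∈ ⋀[ℂ]^(k + 1) V := by
  rw [exteriorPower, pow_succ']
  exact Submodule.mul_mem_mul (LinearMap.mem_range_self _ u) hx

theorem mem_exteriorPower_of_decompose_eq_zero {j : ℕ} {z : ExteriorAlgebra ℂ V}
    (hz : ∀ k ≠ j, (decompose (exteriorPower ℂ · V) z k : ExteriorAlgebra ℂ V) = 0) :
    z ∈ ⋀[ℂ]^j V := by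
  classical
  rw [← sum_support_decompose (exteriorPower ℂ · V) z]
  refine Submodule.sum_mem _ fun k hk => ?_
  obtain rfl : k = j := by
    by_contra hkj
    exact DFinsupp.mem_support_iff.1 hk (Subtype.ext (hz k hkj))
  exact (decompose (exteriorPower ℂ · V) z k).2

theorem one_mem_of_mem_exteriorPower_zero {W : Submodule ℂ (ExteriorAlgebra ℂ V)}
    {x : ExteriorAlgebra ℂ V} (hxW : x ∈ W) (hx : x ∈ ⋀[ℂ]^0 V) (hx0 : x ≠ 0) :
    (1 : ExteriorAlgebra ℂ V) ∈ W := by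
  rw [exteriorPower, pow_zero, Submodule.mem_one] at hx
  obtain ⟨c, rfl⟩ := hx
  have hc : c ≠ 0 := by rintro rfl; exact hx0 (map_zero _)
  simpa [Algebra.algebraMap_eq_smul_one, smul_smul, hc] using W.smul_mem c⁻¹ hxW

theorem eq_top_of_one_mem_of_eOp_mem {W : Submodule ℂ (ExteriorAlgebra ℂ V)}
    (hW : ∀ v : V, ∀ x ∈ W, eOp v x ∈ W) (h1 : (1 : ExteriorAlgebra ℂ V) ∈ W) : W = ⊤ := by
  have hmul : ∀ a : ExteriorAlgebra ℂ V, ∀ y ∈ W, a * y ∈ W := by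
    intro a
    induction a using ExteriorAlgebra.induction with
    | algebraMap r =>
      intro y hy
      rw [Algebra.algebraMap_eq_smul_one, smul_mul_assoc, one_mul]
      exact W.smul_mem r hy
    | ι v => exact hW v
    | mul a b ha hb => exact fun y hy => mul_assoc a b y ▸ ha _ (hb y hy)
    | add a b ha hb => exact fun y hy => add_mul a b y ▸ W.add_mem (ha y hy) (hb y hy)
  exact eq_top_iff.2 fun a _ => mul_one a ▸ hmul a 1 h1

variable {inn : ExteriorAlgebra ℂ V →ₗ⋆[ℂ] ExteriorAlgebra ℂ V →ₗ[ℂ] ℂ}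
  {estar : V → Module.End ℂ (ExteriorAlgebra ℂ V)}

theorem inn_list_prod_ι_mul
    (hadj : ∀ (u : V) (x y : ExteriorAlgebra ℂ V), inn (eOp u x) y = inn x (estar u y))
    (l : List V) (x y : ExteriorAlgebra ℂ V) :
    inn ((l.map (ι ℂ)).prod * x) y = inn x ((l.map estar).reverse.prod y) := by
  induction l generalizing y with
  | nil => simp
  | cons u l ih =>
    rw [List.map_cons, List.prod_cons, mul_assoc, List.map_cons, List.reverse_cons,
      List.prod_append, List.prod_singleton, Module.End.mul_apply]
    exact (hadj u _ y).trans (ih _)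

theorem inn_eq_zero_of_mem_exteriorPower
    (hne : ∀ (m n : ℕ), m ≠ n → ∀ (a : Fin m → V) (b : Fin n → V),
      inn (wedgeList a) (wedgeList b) = 0)
    {m k : ℕ} (hmk : m ≠ k) {x y : ExteriorAlgebra ℂ V}
    (hx : x ∈ ⋀[ℂ]^m V) (hy : y ∈ ⋀[ℂ]^k V) : inn x y = 0 := by
  have hwedge (a : Fin m → V) : inn (wedgeList a) y = 0 :=
    exteriorPower_le_of_forall_wedgeList_mem (N := LinearMap.ker (inn (wedgeList a)))
      (hne m k hmk a) hy
  exact exteriorPower_le_of_forall_wedgeList_mem (N := LinearMap.ker (inn.flip y)) hwedge hx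

theorem inn_eq_inn_decompose
    (hne : ∀ (m n : ℕ), m ≠ n → ∀ (a : Fin m → V) (b : Fin n → V),
      inn (wedgeList a) (wedgeList b) = 0)
    {k : ℕ} {x : ExteriorAlgebra ℂ V} (hx : x ∈ ⋀[ℂ]^k V) (y : ExteriorAlgebra ℂ V) :
    inn x y = inn x (decompose (exteriorPower ℂ · V) y k) := by
  classical
  conv_lhs => rw [← sum_support_decompose (exteriorPower ℂ · V) y]
  rw [map_sum]
  refine Finset.sum_eq_single k (fun j _ hjk => ?_) fun hk => ?_
  · exact inn_eq_zero_of_mem_exteriorPower hne hjk.symm hx (decompose (exteriorPower ℂ · V) y j).2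
  · rw [DFinsupp.notMem_support_iff.1 hk, ZeroMemClass.coe_zero, map_zero]

theorem eq_zero_of_inn_self_eq_zero (hpos : ∀ x : ExteriorAlgebra ℂ V, x ≠ 0 → 0 < (inn x x).re)
    {x : ExteriorAlgebra ℂ V} (h : inn x x = 0) : x = 0 := by
  by_contra hx
  simpa [h] using hpos x hx

theorem exists_inn_wedgeList_ne_zero
    (hpos : ∀ x : ExteriorAlgebra ℂ V, x ≠ 0 → 0 < (inn x x).re)
    {t : ℕ} {x : ExteriorAlgebra ℂ V} (hx : x ∈ ⋀[ℂ]^t V) (hx0 : x ≠ 0) :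
    ∃ b : Fin t → V, inn (wedgeList b) x ≠ 0 := by
  by_contra! h
  exact hx0 <| eq_zero_of_inn_self_eq_zero hpos <|
    exteriorPower_le_of_forall_wedgeList_mem (N := LinearMap.ker (inn.flip x)) h hx

theorem decompose_eq_zero_of_forall_inn_eq_zero
    (hpos : ∀ x : ExteriorAlgebra ℂ V, x ≠ 0 → 0 < (inn x x).re)
    (hne : ∀ (m n : ℕ), m ≠ n → ∀ (a : Fin m → V) (b : Fin n → V),
      inn (wedgeList a) (wedgeList b) = 0)
    {k : ℕ} {z : ExteriorAlgebra ℂ V} (h : ∀ w ∈ ⋀[ℂ]^k V, inn w z = 0) :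
    (decompose (exteriorPower ℂ · V) z k : ExteriorAlgebra ℂ V) = 0 := by
  have hk := (decompose (exteriorPower ℂ · V) z k).2
  exact eq_zero_of_inn_self_eq_zero hpos (inn_eq_inn_decompose hne hk z ▸ h _ hk)

theorem estar_mem_exteriorPower
    (hpos : ∀ x : ExteriorAlgebra ℂ V, x ≠ 0 → 0 < (inn x x).re)
    (hne : ∀ (m n : ℕ), m ≠ n → ∀ (a : Fin m → V) (b : Fin n → V),
      inn (wedgeList a) (wedgeList b) = 0)
    (hadj : ∀ (u : V) (x y : ExteriorAlgebra ℂ V), inn (eOp u x) y = inn x (estar u y))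
    (u : V) {m : ℕ} {y : ExteriorAlgebra ℂ V} (hy : y ∈ ⋀[ℂ]^m V) :
    estar u y ∈ ⋀[ℂ]^(m - 1) V :=
  mem_exteriorPower_of_decompose_eq_zero fun k hk =>
    decompose_eq_zero_of_forall_inn_eq_zero hpos hne fun w hw =>
      hadj u w y ▸ inn_eq_zero_of_mem_exteriorPower hne (by omega) (eOp_mem_exteriorPower u hw) hy

theorem list_prod_estar_mem_exteriorPower
    (hpos : ∀ x : ExteriorAlgebra ℂ V, x ≠ 0 → 0 < (inn x x).re)
    (hne : ∀ (m n : ℕ), m ≠ n → ∀ (a : Fin m → V) (b : Fin n → V),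
      inn (wedgeList a) (wedgeList b) = 0)
    (hadj : ∀ (u : V) (x y : ExteriorAlgebra ℂ V), inn (eOp u x) y = inn x (estar u y))
    (l : List V) {k : ℕ} {y : ExteriorAlgebra ℂ V} (hy : y ∈ ⋀[ℂ]^k V) :
    (l.map estar).reverse.prod y ∈ ⋀[ℂ]^(k - l.length) V := by
  induction l generalizing k y with
  | nil => simpa
  | cons u l ih =>
    simp only [List.map_cons, List.reverse_cons, List.prod_append, List.prod_singleton,
      Module.End.mul_apply, List.length_cons]
    rw [← Nat.sub_sub, Nat.sub_right_comm]
    exact ih (estar_mem_exteriorPower hpos hne hadj u hy)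

theorem one_mem_of_ne_zero
    (hpos : ∀ x : ExteriorAlgebra ℂ V, x ≠ 0 → 0 < (inn x x).re)
    (hne : ∀ (m n : ℕ), m ≠ n → ∀ (a : Fin m → V) (b : Fin n → V),
      inn (wedgeList a) (wedgeList b) = 0)
    (hadj : ∀ (u : V) (x y : ExteriorAlgebra ℂ V), inn (eOp u x) y = inn x (estar u y))
    {W : Submodule ℂ (ExteriorAlgebra ℂ V)} (hW : ∀ v : V, ∀ x ∈ W, estar v x ∈ W)
    {x : ExteriorAlgebra ℂ V} (hxW : x ∈ W) (hx0 : x ≠ 0) :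
    (1 : ExteriorAlgebra ℂ V) ∈ W := by
  classical
  set xs := decompose (exteriorPower ℂ · V) x
  have hsupp : xs.support.Nonempty := by
    rw [Finset.nonempty_iff_ne_empty, Ne, DFinsupp.support_eq_empty]
    exact (map_ne_zero_iff _ (decomposeAddEquiv (exteriorPower ℂ · V)).injective).2 hx0
  set n := xs.support.max' hsupp
  obtain ⟨b, hb⟩ := exists_inn_wedgeList_ne_zero hpos (xs n).2
    (fun h => DFinsupp.mem_support_iff.1 (xs.support.max'_mem hsupp) (Subtype.ext h))
  set T := ((List.ofFn b).map estar).reverse.prod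
  have hTx : inn 1 (T x) ≠ 0 := by
    rw [← inn_list_prod_ι_mul hadj, mul_one, ← wedgeList_eq_prod_map_ι,
      inn_eq_inn_decompose hne (wedgeList_mem_exteriorPower b)]
    exact hb
  have hTx0 : T x ∈ ⋀[ℂ]^0 V := by
    rw [← sum_support_decompose (exteriorPower ℂ · V) x, map_sum]
    refine Submodule.sum_mem _ fun k hk => ?_
    have := list_prod_estar_mem_exteriorPower hpos hne hadj (List.ofFn b) (xs k).2
    rwa [List.length_ofFn, Nat.sub_eq_zero_of_le (xs.support.le_max' k hk)] at this
  have hTW : T x ∈ W :=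
    List.prod_induction (fun f : Module.End ℂ _ => ∀ y ∈ W, f y ∈ W)
      (fun f g hf hg y hy => hf _ (hg y hy)) (fun y hy => hy)
      (by simpa using fun a => hW (b a)) x hxW
  exact one_mem_of_mem_exteriorPower_zero hTW hTx0 fun h => hTx (by rw [h, map_zero])

end

theorem stmt_2_general {V : Type*} [NormedAddCommGroup V] [InnerProductSpace ℂ V]
    (inn : ExteriorAlgebra ℂ V →ₗ⋆[ℂ] ExteriorAlgebra ℂ V →ₗ[ℂ] ℂ)
    (hpos : ∀ x, x ≠ 0 → 0 < (inn x x).re)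
    (hne : ∀ (m n : ℕ), m ≠ n → ∀ (a : Fin m → V) (b : Fin n → V),
      inn (wedgeList a) (wedgeList b) = 0)
    (estar : V → Module.End ℂ (ExteriorAlgebra ℂ V))
    (hadj : ∀ (u : V) (x y : ExteriorAlgebra ℂ V), inn (eOp u x) y = inn x (estar u y)) :
    ∀ W : Submodule ℂ (ExteriorAlgebra ℂ V),
      (∀ v : V, ∀ x ∈ W, eOp v x ∈ W ∧ estar v x ∈ W) → W = ⊥ ∨ W = ⊤ := by
  intro W hW
  refine or_iff_not_imp_left.2 fun hW0 => ?_
  obtain ⟨x, hxW, hx0⟩ := (Submodule.ne_bot_iff W).1 hW0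
  exact eq_top_of_one_mem_of_eOp_mem (fun v x hx => (hW v x hx).1) <|
    one_mem_of_ne_zero hpos hne hadj (fun v x hx => (hW v x hx).2) hxW hx0

/-- The operators `e(v)` and `e(v)*` (v ∈ V) act irreducibly on the exterior algebra
`Λ(V)` of a complex inner product space `V`: any subspace invariant under all `e(v)` and
`e(v)*` is `(0)` or `Λ(V)`. -/
theorem stmt_2 {V : Type*} [NormedAddCommGroup V] [InnerProductSpace ℂ V]
    [FiniteDimensional ℂ V]
    (inn : ExteriorAlgebra ℂ V →ₗ⋆[ℂ] ExteriorAlgebra ℂ V →ₗ[ℂ] ℂ)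
    (hsymm : ∀ x y, inn x y = starRingEnd ℂ (inn y x))
    (hpos : ∀ x, x ≠ 0 → 0 < (inn x x).re)
    (hdet : ∀ (m : ℕ) (a b : Fin m → V),
      inn (wedgeList a) (wedgeList b) =
        Matrix.det (Matrix.of fun i j => (inner ℂ (a i) (b j) : ℂ)))
    (hne : ∀ (m n : ℕ), m ≠ n → ∀ (a : Fin m → V) (b : Fin n → V),
      inn (wedgeList a) (wedgeList b) = 0)
    (estar : V → Module.End ℂ (ExteriorAlgebra ℂ V))
    (hadj : ∀ (u : V) (x y : ExteriorAlgebra ℂ V), inn (eOp u x) y = inn x (estar u y)) :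
    ∀ W : Submodule ℂ (ExteriorAlgebra ℂ V),
      (∀ v : V, ∀ x ∈ W, eOp v x ∈ W ∧ estar v x ∈ W) → W = ⊥ ∨ W = ⊤ :=
  stmt_2_general inn hpos hne estar hadj
end

section
/- Let A be a *-subalgebra of End(V) for a finite-dimensional complex inner product space V (containing the identity and closed under adjoints). Then the double commutant A'' equals A. -/
/-!
Since `A` is closed under adjoints, the orthogonal complement of an `A`-invariant subspace is
again `A`-invariant, so `V` is a semisimple `A`-module. An operator `T ∈ A''` commutes with every
`A`-linear endomorphism of `V`, so by the Jacobson density theorem it agrees with some `a ∈ A` on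
a finite spanning set of `V`, hence `T = a`.
-/

/-- The commutant of a set of linear operators on `V`. -/
def commutant {V : Type*} [NormedAddCommGroup V] [InnerProductSpace ℂ V]
    (S : Set (V →ₗ[ℂ] V)) : Set (V →ₗ[ℂ] V) :=
  {T | ∀ x ∈ S, T * x = x * T}

open Module

theorem Subalgebra.centralizer_centralizer_eq_of_isSemisimpleModule {R M : Type*} [CommRing R]
    [AddCommGroup M] [Module R M] [Module.Finite R M] (A : Subalgebra R (End R M))
    [IsSemisimpleModule A M] :
    (A : Set (End R M)).centralizer.centralizer = A := by
  refine Set.Subset.antisymm (fun T hT => ?_) Set.subset_centralizer_centralizer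
  let f : End (End A M) M :=
    { toFun := T
      map_add' := T.map_add
      map_smul' := fun g m => by
        have hg : g.restrictScalars R ∈ (A : Set (End R M)).centralizer :=
          fun a ha => LinearMap.ext fun m => (g.map_smul ⟨a, ha⟩ m).symm
        exact (LinearMap.congr_fun (hT _ hg) m).symm }
  obtain ⟨s, hs⟩ := Module.Finite.fg_top (R := R) (M := M)
  obtain ⟨a, ha⟩ := jacobson_density f s
  have hTa : T = a := LinearMap.ext_on hs ha
  exact hTa ▸ a.2

theorem isSemisimpleModule_of_adjoint_mem {𝕜 V : Type*} [RCLike 𝕜] [NormedAddCommGroup V]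
    [InnerProductSpace 𝕜 V] [FiniteDimensional 𝕜 V] (A : Subalgebra 𝕜 (V →ₗ[𝕜] V))
    (hA : ∀ x ∈ A, LinearMap.adjoint x ∈ A) : IsSemisimpleModule A V := by
  refine { exists_isCompl := fun N => ?_ }
  let Nperp : Submodule A V :=
    { (N.restrictScalars 𝕜)ᗮ with
      smul_mem' := fun a v hv => by
        have hN : N.restrictScalars 𝕜 ∈ End.invtSubmodule (LinearMap.adjoint (a : End 𝕜 V)) :=
          fun u hu => N.smul_mem ⟨_, hA a a.2⟩ hu
        exact End.mem_invtSubmodule_adjoint_iff.mp hN hv }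
  refine ⟨Nperp, ?_⟩
  rw [← Submodule.isCompl_restrictScalars_iff 𝕜]
  exact Submodule.isCompl_orthogonal _

theorem commutant_eq_centralizer {V : Type*} [NormedAddCommGroup V] [InnerProductSpace ℂ V]
    (S : Set (V →ₗ[ℂ] V)) : commutant S = S.centralizer :=
  Set.ext fun _ => forall₂_congr fun _ _ => eq_comm

/-- (Double commutant theorem) Let `A` be a *-subalgebra of `End(V)` for a
finite-dimensional complex inner product space `V` (containing the identity and closed
under adjoints). Then the double commutant `A''` equals `A`. -/
theorem stmt_3 {V : Type*} [NormedAddCommGroup V] [InnerProductSpace ℂ V]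
    [FiniteDimensional ℂ V]
    (A : Subalgebra ℂ (V →ₗ[ℂ] V))
    (hstar : ∀ x ∈ A, LinearMap.adjoint x ∈ A) :
    commutant (commutant (A : Set (V →ₗ[ℂ] V))) = A := by
  have := isSemisimpleModule_of_adjoint_mem A hstar
  rw [commutant_eq_centralizer, commutant_eq_centralizer]
  exact A.centralizer_centralizer_eq_of_isSemisimpleModule
end

section
/- A finite-dimensional real Lie algebra 𝔤 that is semisimple and compact (admits an invariant inner product and has trivial centre) has negative-definite Killing form B(X,Y) = Tr(ad X ∘ ad Y); conversely if B is negative definite then 𝔤 is compact semisimple. -/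
/-!
An invariant inner product makes every `ad X` skew-adjoint, so in an orthonormal basis
`B(X, X) = Tr (ad X ∘ ad X) = -∑ᵢ ‖ad X eᵢ‖²`, which vanishes only when `ad X = 0`, i.e. when `X`
is central. Conversely `-B` is itself an invariant inner product, and a central `X` has
`B(X, X) = 0`.
-/

open scoped InnerProductSpace

namespace LinearMap

variable {E : Type*} [NormedAddCommGroup E] [InnerProductSpace ℝ E]

theorem trace_comp_self_eq_neg_sum_norm_sq_of_skew {ι : Type*} [Fintype ι]
    (b : OrthonormalBasis ι ℝ E) {A : E →ₗ[ℝ] E} (hA : ∀ x y, ⟪A x, y⟫_ℝ = -⟪x, A y⟫_ℝ) :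
    trace ℝ E (A ∘ₗ A) = -∑ i, ‖A (b i)‖ ^ 2 := by
  simp only [trace_eq_sum_inner _ b, comp_apply, ← Finset.sum_neg_distrib,
    ← real_inner_self_eq_norm_sq]
  refine Finset.sum_congr rfl fun i _ => ?_
  rw [hA, real_inner_comm, neg_neg]

theorem trace_comp_self_neg_of_skew [FiniteDimensional ℝ E] {A : E →ₗ[ℝ] E}
    (hA : ∀ x y, ⟪A x, y⟫_ℝ = -⟪x, A y⟫_ℝ) (hA₀ : A ≠ 0) : trace ℝ E (A ∘ₗ A) < 0 := by
  let b := stdOrthonormalBasis ℝ E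
  obtain ⟨i, hi⟩ : ∃ i, A (b i) ≠ 0 := by
    by_contra! h
    exact hA₀ (b.toBasis.ext fun i => by simpa using h i)
  rw [trace_comp_self_eq_neg_sum_norm_sq_of_skew b hA, neg_neg_iff_pos]
  exact Finset.sum_pos' (fun j _ => by positivity) ⟨i, Finset.mem_univ i, by positivity⟩

end LinearMap

namespace LieAlgebra

variable {L : Type*} [LieRing L] [LieAlgebra ℝ L]

theorem mem_center_iff_ad_eq_zero {X : L} : X ∈ center ℝ L ↔ ad ℝ L X = 0 := by
  rw [← self_module_ker_eq_center, LieModule.mem_ker]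
  simp [LinearMap.ext_iff]

theorem killingForm_self_eq_zero_of_mem_center {X : L} (hX : X ∈ center ℝ L) :
    killingForm ℝ L X X = 0 := by
  rw [killingForm_apply_apply, mem_center_iff_ad_eq_zero.mp hX, LinearMap.zero_comp, map_zero]

variable [Module.Finite ℝ L]

theorem killingForm_self_neg_of_invariant_inner (B : LinearMap.BilinForm ℝ L)
    (hsymm : ∀ X Y : L, B X Y = B Y X) (hpos : ∀ X, X ≠ 0 → 0 < B X X)
    (hinv : ∀ X Y Z : L, B ⁅X, Y⁆ Z + B Y ⁅X, Z⁆ = 0) {X : L} (hX : ad ℝ L X ≠ 0) :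
    killingForm ℝ L X X < 0 := by
  let core : InnerProductSpace.Core ℝ L :=
    { inner := fun x y => B x y
      conj_inner_symm := fun x y => by simpa using hsymm y x
      re_inner_nonneg := fun x => by
        rcases eq_or_ne x 0 with rfl | hx
        · simp
        · simpa using (hpos x hx).le
      add_left := fun x y z => by simp
      smul_left := fun x y r => by simp
      definite := fun x hx => by
        by_contra h
        exact (hpos x h).ne' (by simpa using hx) }
  let : NormedAddCommGroup L := core.toNormedAddCommGroup
  let : InnerProductSpace ℝ L := InnerProductSpace.ofCore core.toCore
  rw [killingForm_apply_apply]
  exact LinearMap.trace_comp_self_neg_of_skew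
    (fun Y Z => eq_neg_of_add_eq_zero_left (hinv X Y Z)) hX

end LieAlgebra

/-- A finite-dimensional real Lie algebra `𝔤` that is semisimple and compact (admits an
invariant inner product and has trivial centre) has negative-definite Killing form
`B(X,Y) = Tr(ad X ∘ ad Y)`; conversely if `B` is negative definite then `𝔤` is compact
semisimple. -/
theorem stmt_10 {L : Type*} [LieRing L] [LieAlgebra ℝ L] [Module.Finite ℝ L] :
    ((∃ B : LinearMap.BilinForm ℝ L,
        (∀ X Y : L, B X Y = B Y X) ∧
        (∀ X : L, X ≠ 0 → 0 < B X X) ∧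
        (∀ X Y Z : L, B ⁅X, Y⁆ Z + B Y ⁅X, Z⁆ = 0)) ∧
      LieAlgebra.center ℝ L = ⊥)
    ↔ (∀ X : L, X ≠ 0 → killingForm ℝ L X X < 0) := by
  constructor
  · rintro ⟨⟨B, hsymm, hpos, hinv⟩, hcen⟩ X hX
    refine LieAlgebra.killingForm_self_neg_of_invariant_inner B hsymm hpos hinv fun hX₀ => hX ?_
    rwa [← LieAlgebra.mem_center_iff_ad_eq_zero, hcen, LieSubmodule.mem_bot] at hX₀
  · intro hK
    refine ⟨⟨-killingForm ℝ L, fun X Y => by simp [LieModule.traceForm_comm ℝ L L X Y],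
      fun X hX => by simpa using hK X hX, fun X Y Z => ?_⟩, ?_⟩
    · simp [LieModule.traceForm_apply_lie_apply' ℝ L L X Y Z]
    · refine (LieSubmodule.eq_bot_iff _).mpr fun X hX => ?_
      by_contra hX₀
      exact (hK X hX₀).ne (LieAlgebra.killingForm_self_eq_zero_of_mem_center hX)
end

section
/- Let E, F, H be operators on a complex inner product space satisfying [E,F] = H, [H,E] = 2E, [H,F] = −2F, with E* = F and H* = H. If a vector v ≠ 0 satisfies Ev = 0 and Hv = λv, then λ is a non-negative integer. -/
/-!
Starting from the highest-weight vector `v`, the vectors `Fⁿ v` satisfy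
`E (Fⁿ⁺¹ v) = (n + 1) (λ - n) Fⁿ v`. Since `F = E*`, this gives
`‖Fⁿ⁺¹ v‖² = (n + 1) (Re λ - n) ‖Fⁿ v‖²`; positivity of norms forces `Fⁿ v = 0` once `n > Re λ`.
At the last nonzero vector `Fᵐ v` the first identity reads `0 = (m + 1) (λ - m) Fᵐ v`, so `λ = m`.
-/

section LoweringChain

variable {R M : Type*} [CommRing R] [AddCommGroup M] [Module R M] {E F H : M →ₗ[R] M}
  {v : M} {l : R}

theorem h_apply_iterate_f (hHF : H ∘ₗ F - F ∘ₗ H = -(2 • F)) (hHv : H v = l • v) (n : ℕ) :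
    H (F^[n] v) = (l - 2 * n) • F^[n] v := by
  induction n with
  | zero => simpa using hHv
  | succ n ih =>
    have hHFx := LinearMap.congr_fun hHF (F^[n] v)
    simp only [LinearMap.sub_apply, LinearMap.comp_apply, LinearMap.neg_apply,
      LinearMap.smul_apply, ih, map_smul] at hHFx
    rw [Function.iterate_succ_apply']
    push_cast
    linear_combination (norm := module) hHFx

theorem e_apply_iterate_f_succ (hEF : E ∘ₗ F - F ∘ₗ E = H)
    (hHF : H ∘ₗ F - F ∘ₗ H = -(2 • F)) (hEv : E v = 0) (hHv : H v = l • v) (n : ℕ) :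
    E (F^[n + 1] v) = ((n + 1) * (l - n)) • F^[n] v := by
  induction n with
  | zero =>
    have hEFv := LinearMap.congr_fun hEF v
    simp only [LinearMap.sub_apply, LinearMap.comp_apply, hEv, map_zero, hHv] at hEFv
    simpa using hEFv
  | succ n ih =>
    have hEFx := LinearMap.congr_fun hEF (F^[n + 1] v)
    simp only [LinearMap.sub_apply, LinearMap.comp_apply, ih, map_smul,
      h_apply_iterate_f hHF hHv] at hEFx
    rw [← Function.iterate_succ_apply' F n] at hEFx
    rw [Function.iterate_succ_apply' F (n + 1)]
    push_cast
    linear_combination (norm := module) hEFx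

theorem exists_nat_of_iterate_f_eq_zero [IsDomain R] [CharZero R] [Module.IsTorsionFree R M]
    (hEF : E ∘ₗ F - F ∘ₗ E = H) (hHF : H ∘ₗ F - F ∘ₗ H = -(2 • F)) (hEv : E v = 0)
    (hHv : H v = l • v) (hv : v ≠ 0) (hF : ∃ n, F^[n] v = 0) :
    ∃ m : ℕ, l = m := by
  obtain ⟨m, hm, hm_succ⟩ := Nat.exists_not_and_succ_of_not_zero_of_exists hv hF
  have hE := e_apply_iterate_f_succ hEF hHF hEv hHv m
  rw [hm_succ, map_zero, eq_comm, smul_eq_zero_iff_left hm, mul_eq_zero, sub_eq_zero] at hE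
  exact ⟨m, hE.resolve_left (Nat.cast_add_one_ne_zero m)⟩

end LoweringChain

theorem exists_eq_zero_of_nonneg_of_eq_mul {a : ℕ → ℝ} {x : ℝ} (ha : ∀ n, 0 ≤ a n)
    (hrec : ∀ n : ℕ, a (n + 1) = (n + 1) * (x - n) * a n) : ∃ n, a n = 0 := by
  obtain ⟨N, hN⟩ := exists_nat_gt x
  refine ⟨N, (ha N).antisymm' ?_⟩
  have hcoef : ((N : ℝ) + 1) * (x - N) < 0 := mul_neg_of_pos_of_neg (by positivity) (by linarith)
  nlinarith [ha (N + 1), hrec N]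

theorem norm_sq_iterate_f_succ {𝓗 : Type*} [NormedAddCommGroup 𝓗] [InnerProductSpace ℂ 𝓗]
    {E F H : 𝓗 →ₗ[ℂ] 𝓗} {v : 𝓗} {l : ℂ} (hEF : E ∘ₗ F - F ∘ₗ E = H)
    (hHF : H ∘ₗ F - F ∘ₗ H = -(2 • F)) (hadjE : ∀ x y : 𝓗, inner ℂ (E x) y = inner ℂ x (F y))
    (hEv : E v = 0) (hHv : H v = l • v) (n : ℕ) :
    ‖F^[n + 1] v‖ ^ 2 = (n + 1) * (l.re - n) * ‖F^[n] v‖ ^ 2 := by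
  have hinner : inner ℂ (F^[n + 1] v) (F^[n + 1] v) =
      (starRingEnd ℂ) ((n + 1) * (l - n)) * inner ℂ (F^[n] v) (F^[n] v) := by
    rw [← inner_smul_left, ← e_apply_iterate_f_succ hEF hHF hEv hHv, hadjE,
      ← Function.iterate_succ_apply' F n]
  have hre := congr_arg Complex.re hinner
  rw [inner_self_eq_norm_sq_to_K, inner_self_eq_norm_sq_to_K] at hre
  simpa [← Complex.ofReal_pow] using hre

theorem stmt_12_general {𝓗 : Type*} [NormedAddCommGroup 𝓗] [InnerProductSpace ℂ 𝓗]
    (E F H : 𝓗 →ₗ[ℂ] 𝓗)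
    (hEF : E ∘ₗ F - F ∘ₗ E = H)
    (hHF : H ∘ₗ F - F ∘ₗ H = -(2 • F))
    (hadjE : ∀ x y : 𝓗, (inner ℂ (E x) y : ℂ) = inner ℂ x (F y))
    (v : 𝓗) (hv : v ≠ 0) (l : ℂ) (hEv : E v = 0) (hHv : H v = l • v) :
    ∃ d : ℕ, l = d := by
  obtain ⟨n, hn⟩ := exists_eq_zero_of_nonneg_of_eq_mul (a := fun n ↦ ‖F^[n] v‖ ^ 2)
    (fun _ ↦ by positivity) (norm_sq_iterate_f_succ hEF hHF hadjE hEv hHv)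
  exact exists_nat_of_iterate_f_eq_zero hEF hHF hEv hHv hv ⟨n, by simpa using hn⟩

/-- Let `E, F, H` be operators on a complex inner product space satisfying `[E,F] = H`,
`[H,E] = 2E`, `[H,F] = −2F`, with `E* = F` and `H* = H`. If a vector `v ≠ 0` satisfies
`Ev = 0` and `Hv = λv`, then `λ` is a non-negative integer. -/
theorem stmt_12 {𝓗 : Type*} [NormedAddCommGroup 𝓗] [InnerProductSpace ℂ 𝓗]
    (E F H : 𝓗 →ₗ[ℂ] 𝓗)
    (hEF : E ∘ₗ F - F ∘ₗ E = H)
    (hHE : H ∘ₗ E - E ∘ₗ H = 2 • E)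
    (hHF : H ∘ₗ F - F ∘ₗ H = -(2 • F))
    (hadjE : ∀ x y : 𝓗, (inner ℂ (E x) y : ℂ) = inner ℂ x (F y))
    (hadjH : ∀ x y : 𝓗, (inner ℂ (H x) y : ℂ) = inner ℂ x (H y))
    (v : 𝓗) (hv : v ≠ 0) (l : ℂ) (hEv : E v = 0) (hHv : H v = l • v) :
    ∃ d : ℕ, l = d :=
  stmt_12_general E F H hEF hHF hadjE v hv l hEv hHv
end

section
/- Every finite-dimensional representation of the complex Lie algebra sl₂ (with basis E, F, H satisfying [E,F]=H, [H,E]=2E, [H,F]=−2F) is completely reducible, i.e. a direct sum of irreducible subrepresentations. -/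
/-!
The heart of the argument is the vanishing of the first cohomology of finite-dimensional
`sl₂`-modules: if every `⁅x, p⁆` lies in a Lie submodule `N`, then `p` differs from an invariant
vector by an element of `N`. This is proved by induction on the dimension, passing to the quotient
by an atom `A ≤ N`. On the atom `A` the Casimir `C = EF + FE + H²/2` acts by a scalar `c`
(Schur). If `c ≠ 0`, then `c⁻¹ • C p` is the required correction. If `c = 0`, a primitive vector
of weight `n` has Casimir eigenvalue `n (n + 2) / 2`, so `n = 0` and `A` is trivial; then `p` is
itself invariant, because `sl₂ = ⁅sl₂, sl₂⁆`.

Applied in `Hom(V, W)` to a linear projection `p` of `V` onto a Lie submodule `W`, this corrects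
`p` to an equivariant projection, whose kernel is an invariant complement of `W`.
-/

open LieAlgebra.SpecialLinear LieModule Module

lemma Ring.lie_mul {A : Type*} [Ring A] (a b c : A) : ⁅a, b * c⁆ = ⁅a, b⁆ * c + b * ⁅a, c⁆ := by
  simp only [Ring.lie_def]
  noncomm_ring

section Schur

variable {K L M : Type*} [Field K] [IsAlgClosed K] [LieRing L] [LieAlgebra K L] [AddCommGroup M]
  [Module K M] [LieRingModule L M] [LieModule K L M] [FiniteDimensional K M] [IsIrreducible K L M]

theorem LieModuleHom.exists_forall_eq_smul (f : M →ₗ⁅K, L⁆ M) : ∃ c : K, ∀ m, f m = c • m := by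
  have := nontrivial_of_isIrreducible K L M
  obtain ⟨c, hc⟩ := Module.End.exists_eigenvalue (f : Module.End K M)
  obtain ⟨v, hv⟩ := hc.exists_hasEigenvector
  have hker : (f - c • LieModuleHom.id).ker = ⊤ := by
    refine (IsSimpleOrder.eq_bot_or_eq_top _).resolve_left fun h ↦ hv.2 ?_
    rw [← LieSubmodule.mem_bot (R := K) (L := L), ← h, LieModuleHom.mem_ker]
    simpa [sub_eq_zero] using hv.apply_eq_smul
  refine ⟨c, fun m ↦ ?_⟩
  have hm : m ∈ (f - c • LieModuleHom.id).ker := hker ▸ LieSubmodule.mem_top m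
  simpa [sub_eq_zero] using hm

end Schur

namespace LieSubmodule

variable {R L M : Type*} [CommRing R] [LieRing L] [AddCommGroup M] [Module R M] [LieRingModule L M]

lemma isIrreducible_of_isAtom {N : LieSubmodule R L M} (hN : IsAtom N) : IsIrreducible R L N := by
  have : Nontrivial N := (nontrivial_iff_ne_bot R L M).mpr hN.1
  refine IsIrreducible.mk fun N' hN' ↦ ?_
  by_contra hne
  have hlt : N'.map N.incl < N := map_incl_lt_iff_lt_top.mpr (lt_top_iff_ne_top.mpr hne)
  exact hN' (map_injective_of_injective Subtype.coe_injective (by rw [hN.2 _ hlt, map_bot]))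

theorem isCompl_ker_of_proj {W : LieSubmodule R L M} (f : M →ₗ⁅R, L⁆ W) (hf : ∀ w : W, f w = w) :
    IsCompl W f.ker := by
  rw [← isCompl_toSubmodule]
  exact LinearMap.isCompl_of_proj (f := (f : M →ₗ[R] W)) hf

variable [LieAlgebra R L] [LieModule R L M]

def vanishingOn (W : LieSubmodule R L M) (N : Type*) [AddCommGroup N] [Module R N]
    [LieRingModule L N] [LieModule R L N] : LieSubmodule R L (M →ₗ[R] N) where
  carrier := {φ | ∀ m ∈ W, φ m = 0}
  add_mem' hφ hψ m hm := by rw [LinearMap.add_apply, hφ m hm, hψ m hm, add_zero]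
  zero_mem' _ _ := rfl
  smul_mem' t φ hφ m hm := by rw [LinearMap.smul_apply, hφ m hm, smul_zero]
  lie_mem {x φ} hφ m hm := by
    rw [LieHom.lie_apply, hφ m hm, hφ _ (W.lie_mem hm), lie_zero, sub_zero]

end LieSubmodule

theorem exists_fin_isAtom_iSupIndep_iSup_eq_top {α : Type*} [CompleteLattice α]
    [IsModularLattice α] [IsCompactlyGenerated α] [ComplementedLattice α] [WellFoundedGT α] :
    ∃ (n : ℕ) (a : Fin n → α), iSup a = ⊤ ∧ iSupIndep a ∧ ∀ i, IsAtom (a i) := by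
  obtain ⟨s, hs, hsup, hatoms⟩ :=
    exists_sSupIndep_of_sSup_atoms_eq_top (sSup_atoms_eq_top (α := α))
  have := (WellFoundedGT.finite_of_sSupIndep hs).fintype
  let e := (Fintype.equivFin s).symm
  refine ⟨Fintype.card s, (↑) ∘ e, ?_, ((sSupIndep_iff s).mp hs).comp e.injective,
    fun i ↦ hatoms (e i).2⟩
  rw [Function.comp_def, e.surjective.iSup_comp (g := ((↑) : s → α)), ← sSup_eq_iSup', hsup]

namespace LieAlgebra.SpecialLinear.Sl2

section Basis

variable (R : Type*) [CommRing R]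

def E : sl (Fin 2) R := single 0 1 (by decide) 1

def F : sl (Fin 2) R := single 1 0 (by decide) 1

def H : sl (Fin 2) R := singleSubSingle 0 1 1

lemma lie_E_F : ⁅E R, F R⁆ = H R := by
  refine Subtype.ext ?_
  rw [sl_bracket]
  ext i j
  fin_cases i <;> fin_cases j <;> simp [E, F, H, Matrix.mul_apply, Matrix.single]

lemma lie_H_E : ⁅H R, E R⁆ = (2 : R) • E R := by
  refine Subtype.ext ?_
  rw [sl_bracket]
  ext i j
  fin_cases i <;> fin_cases j <;> simp [E, H, Matrix.mul_apply, Matrix.single]; norm_num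

lemma lie_H_F : ⁅H R, F R⁆ = (-2 : R) • F R := by
  refine Subtype.ext ?_
  rw [sl_bracket]
  ext i j
  fin_cases i <;> fin_cases j <;> simp [F, H, Matrix.mul_apply, Matrix.single]; norm_num

lemma exists_eq_smul_E_add_smul_F_add_smul_H (x : sl (Fin 2) R) :
    ∃ a b c : R, x = a • E R + b • F R + c • H R := by
  refine ⟨x.val 0 1, x.val 1 0, x.val 0 0, ?_⟩
  have htr : x.val 0 0 + x.val 1 1 = 0 := by
    simpa [Matrix.trace, Fin.sum_univ_two] using LinearMap.mem_ker.mp x.2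
  ext i j
  fin_cases i <;> fin_cases j <;> simp [E, F, H, Matrix.single]
  linear_combination htr

theorem isSl2Triple [Nontrivial R] : IsSl2Triple (H R) (E R) (F R) where
  h_ne_zero h := by simpa [H] using congr_arg (fun x : sl (Fin 2) R ↦ x.val 0 0) h
  lie_e_f := lie_E_F R
  lie_h_e_nsmul := by rw [lie_H_E, two_smul, two_nsmul]
  lie_h_f_nsmul := by rw [lie_H_F, neg_smul, two_smul, two_nsmul]

end Basis

lemma mem_maxTrivSubmodule_of_E_F_H {R M : Type*} [CommRing R] [AddCommGroup M] [Module R M]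
    [LieRingModule (sl (Fin 2) R) M] [LieModule R (sl (Fin 2) R) M] {m : M}
    (hE : ⁅E R, m⁆ = 0) (hF : ⁅F R, m⁆ = 0) (hH : ⁅H R, m⁆ = 0) :
    m ∈ maxTrivSubmodule R (sl (Fin 2) R) M := by
  intro x
  obtain ⟨a, b, c, rfl⟩ := exists_eq_smul_E_add_smul_F_add_smul_H R x
  simp [hE, hF, hH]

section Casimir

variable {K : Type*} [Field K] [CharZero K] {M N : Type*} [AddCommGroup M] [Module K M]
  [LieRingModule (sl (Fin 2) K) M] [LieModule K (sl (Fin 2) K) M] [AddCommGroup N] [Module K N]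
  [LieRingModule (sl (Fin 2) K) N] [LieModule K (sl (Fin 2) K) N]

lemma mem_maxTrivSubmodule_of_forall_lie_lie {m : M}
    (hm : ∀ x y : sl (Fin 2) K, ⁅⁅x, y⁆, m⁆ = 0) : m ∈ maxTrivSubmodule K (sl (Fin 2) K) M := by
  refine mem_maxTrivSubmodule_of_E_F_H ?_ ?_ ?_
  · simpa [lie_H_E, two_ne_zero] using hm (H K) (E K)
  · simpa [lie_H_F, two_ne_zero] using hm (H K) (F K)
  · simpa [lie_E_F] using hm (E K) (F K)

attribute [local instance] LieRing.ofAssociativeRing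

theorem commute_casimir {A : Type*} [Ring A] [Algebra K A] {e f h : A}
    (hef : ⁅e, f⁆ = h) (hhe : ⁅h, e⁆ = (2 : K) • e) (hhf : ⁅h, f⁆ = (-2 : K) • f) :
    Commute e (e * f + f * e + (2⁻¹ : K) • (h * h)) ∧
      Commute f (e * f + f * e + (2⁻¹ : K) • (h * h)) ∧
      Commute h (e * f + f * e + (2⁻¹ : K) • (h * h)) := by
  have hfe : ⁅f, e⁆ = -h := by rw [← lie_skew, hef]
  have heh : ⁅e, h⁆ = (-2 : K) • e := by rw [← lie_skew, hhe, neg_smul]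
  have hfh : ⁅f, h⁆ = (2 : K) • f := by rw [← lie_skew, hhf, neg_smul, neg_neg]
  have hsmul (a b : A) (c : K) : ⁅a, c • b⁆ = c • ⁅a, b⁆ := by
    simp only [Ring.lie_def, mul_smul_comm, smul_mul_assoc, smul_sub]
  simp only [commute_iff_lie_eq, lie_add, hsmul, Ring.lie_mul, lie_self, hef, hhe, hhf, hfe,
    heh, hfh, neg_mul, mul_neg, smul_mul_assoc, mul_smul_comm, zero_mul, mul_zero]
  refine ⟨?_, ?_, ?_⟩ <;> module

variable (K M) in
def casimir : M →ₗ⁅K, sl (Fin 2) K⁆ M where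
  toLinearMap := toEnd K _ M (E K) * toEnd K _ M (F K) + toEnd K _ M (F K) * toEnd K _ M (E K) +
    (2⁻¹ : K) • (toEnd K _ M (H K) * toEnd K _ M (H K))
  map_lie' {x m} := by
    obtain ⟨hE, hF, hH⟩ := commute_casimir (e := toEnd K _ M (E K)) (f := toEnd K _ M (F K))
      (h := toEnd K _ M (H K)) (by rw [← LieHom.map_lie, lie_E_F])
      (by rw [← LieHom.map_lie, lie_H_E, map_smul]) (by rw [← LieHom.map_lie, lie_H_F, map_smul])
    obtain ⟨a, b, c, rfl⟩ := exists_eq_smul_E_add_smul_F_add_smul_H K x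
    have hx := ((hE.smul_left a).add_left (hF.smul_left b)).add_left (hH.smul_left c)
    rw [← map_smul, ← map_smul, ← map_smul, ← map_add, ← map_add] at hx
    exact (LinearMap.congr_fun hx.eq m).symm

lemma casimir_apply (m : M) :
    casimir K M m = ⁅E K, ⁅F K, m⁆⁆ + ⁅F K, ⁅E K, m⁆⁆ + (2⁻¹ : K) • ⁅H K, ⁅H K, m⁆⁆ := by
  simp [casimir, toEnd_apply_apply]

lemma _root_.LieModuleHom.map_casimir (φ : M →ₗ⁅K, sl (Fin 2) K⁆ N) (m : M) :
    φ (casimir K M m) = casimir K N (φ m) := by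
  simp [casimir_apply]

lemma casimir_mem_of_forall_lie_mem {P : LieSubmodule K (sl (Fin 2) K) M} {m : M}
    (hm : ∀ x : sl (Fin 2) K, ⁅x, m⁆ ∈ P) : casimir K M m ∈ P := by
  rw [casimir_apply]
  exact add_mem (add_mem (P.lie_mem (hm _)) (P.lie_mem (hm _))) (P.smul_mem _ (P.lie_mem (hm _)))

lemma _root_.IsSl2Triple.HasPrimitiveVectorWith.casimir_eq {m : M} {μ : K}
    (P : (isSl2Triple K).HasPrimitiveVectorWith m μ) :
    casimir K M m = (2⁻¹ * μ * (μ + 2)) • m := by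
  rw [casimir_apply, P.lie_e, lie_zero, add_zero, leibniz_lie, lie_E_F, P.lie_h, lie_smul, P.lie_h,
    P.lie_e, lie_zero, add_zero]
  module

end Casimir

variable {K : Type*} [Field K] [CharZero K] [IsAlgClosed K] {M : Type*} [AddCommGroup M]
  [Module K M] [LieRingModule (sl (Fin 2) K) M] [LieModule K (sl (Fin 2) K) M]
  [FiniteDimensional K M]

theorem isTrivial_of_casimir_eq_zero [IsIrreducible K (sl (Fin 2) K) M]
    (hC : ∀ m : M, casimir K M m = 0) : IsTrivial (sl (Fin 2) K) M := by
  have := nontrivial_of_isIrreducible K (sl (Fin 2) K) M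
  obtain ⟨μ, m, -, P⟩ := (isSl2Triple K).exists_hasPrimitiveVectorWith (R := K) (M := M)
  obtain ⟨n, rfl⟩ := P.exists_nat
  have hn : n = 0 := by
    have h := P.casimir_eq
    rw [hC, eq_comm, smul_eq_zero] at h
    have : (n : K) * (n + 2) = 0 := by simpa using h.resolve_right P.ne_zero
    exact_mod_cast (mul_eq_zero.mp this).resolve_right (by norm_cast)
  subst hn
  have hF : ⁅F K, m⁆ = 0 := by
    simpa [toEnd_apply_apply] using P.pow_toEnd_f_eq_zero_of_eq_nat (n := 0) rfl
  have hm := mem_maxTrivSubmodule_of_E_F_H (R := K) P.lie_e hF (by simpa using P.lie_h)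
  rw [isTrivial_iff_max_triv_eq_top K]
  exact (IsSimpleOrder.eq_bot_or_eq_top _).resolve_left fun h ↦ P.ne_zero (by
    rwa [h, LieSubmodule.mem_bot] at hm)

theorem exists_sub_mem_maxTrivSubmodule_of_isAtom {A : LieSubmodule K (sl (Fin 2) K) M}
    (hA : IsAtom A) {p : M} (hp : ∀ x : sl (Fin 2) K, ⁅x, p⁆ ∈ A) :
    ∃ a ∈ A, p - a ∈ maxTrivSubmodule K (sl (Fin 2) K) M := by
  have := LieSubmodule.isIrreducible_of_isAtom hA
  obtain ⟨c, hc⟩ := (casimir K A).exists_forall_eq_smul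
  have hcA (a : M) (ha : a ∈ A) : casimir K M a = c • a := by
    simpa [hc] using (A.incl.map_casimir ⟨a, ha⟩).symm
  by_cases hc0 : c = 0
  · have hAtriv : A ≤ maxTrivSubmodule K (sl (Fin 2) K) M :=
      (trivial_iff_le_maximal_trivial K _ M A).mp
        (isTrivial_of_casimir_eq_zero fun a ↦ by rw [hc, hc0, zero_smul])
    refine ⟨0, A.zero_mem, ?_⟩
    rw [sub_zero]
    refine mem_maxTrivSubmodule_of_forall_lie_lie fun x y ↦ ?_
    rw [lie_lie, hAtriv (hp y) x, hAtriv (hp x) y, sub_zero]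
  · refine ⟨c⁻¹ • casimir K M p, A.smul_mem _ (casimir_mem_of_forall_lie_mem hp), fun x ↦ ?_⟩
    rw [lie_sub, lie_smul, ← LieModuleHom.map_lie, hcA _ (hp x), smul_smul, inv_mul_cancel₀ hc0,
      one_smul, sub_self]

theorem exists_sub_mem_maxTrivSubmodule (N : LieSubmodule K (sl (Fin 2) K) M) {p : M}
    (hp : ∀ x : sl (Fin 2) K, ⁅x, p⁆ ∈ N) :
    ∃ n ∈ N, p - n ∈ maxTrivSubmodule K (sl (Fin 2) K) M := by
  induction hd : finrank K M using Nat.strong_induction_on generalizing M with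
  | _ d ih =>
  obtain rfl | ⟨A, hA, hAN⟩ := eq_bot_or_exists_atom_le N
  · exact ⟨0, zero_mem _, by simpa using hp⟩
  set π := LieSubmodule.Quotient.mk' A
  have hdim : finrank K (M ⧸ A) < d := by
    have h₁ : finrank K (M ⧸ A) + finrank K A = finrank K M :=
      A.toSubmodule.finrank_quotient_add_finrank
    have h₂ : 0 < finrank K A :=
      Submodule.one_le_finrank_iff.mpr ((LieSubmodule.toSubmodule_eq_bot A).not.mpr hA.1)
    omega
  obtain ⟨n', hn', hpn'⟩ := ih _ hdim (N.map π) (p := π p)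
    (fun x ↦ π.map_lie x p ▸ LieSubmodule.mem_map_of_mem (hp x)) rfl
  obtain ⟨n, hn, rfl⟩ := (LieSubmodule.mem_map _).mp hn'
  obtain ⟨a, ha, hpa⟩ := exists_sub_mem_maxTrivSubmodule_of_isAtom hA (p := p - n) fun x ↦ by
    rw [← LieSubmodule.Quotient.mk_eq_zero, LieModuleHom.map_lie, map_sub]
    exact hpn' x
  exact ⟨n + a, N.add_mem hn (hAN ha), by rwa [← sub_sub]⟩

theorem exists_isCompl (W : LieSubmodule K (sl (Fin 2) K) M) : ∃ X, IsCompl W X := by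
  obtain ⟨q, hq⟩ := W.toSubmodule.exists_isCompl
  let p : M →ₗ[K] W := W.toSubmodule.projectionOnto q hq
  have hpW (w : W) : p w = w := Submodule.projectionOnto_apply_left hq w
  obtain ⟨n, hn, hpn⟩ := exists_sub_mem_maxTrivSubmodule (W.vanishingOn W) (p := p)
    fun x w hw ↦ by
      rw [LieHom.lie_apply, hpW ⟨w, hw⟩, hpW ⟨_, W.lie_mem hw⟩, sub_eq_zero]
      rfl
  let ψ := maxTrivLinearMapEquivLieModuleHom ⟨p - n, hpn⟩
  exact ⟨ψ.ker, W.isCompl_ker_of_proj ψ fun w ↦ by simp [ψ, hpW, hn w w.2]⟩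

instance : ComplementedLattice (LieSubmodule K (sl (Fin 2) K) M) :=
  ⟨exists_isCompl⟩

end LieAlgebra.SpecialLinear.Sl2

/-- Every finite-dimensional representation of the complex Lie algebra `sl₂` is
completely reducible, i.e. a direct sum of irreducible subrepresentations. -/
theorem stmt_13 {V : Type*} [AddCommGroup V] [Module ℂ V] [FiniteDimensional ℂ V]
    [LieRingModule (sl (Fin 2) ℂ) V] [LieModule ℂ (sl (Fin 2) ℂ) V] :
    ∃ (n : ℕ) (W : Fin n → LieSubmodule ℂ (sl (Fin 2) ℂ) V),
      ((⨆ i, W i) = ⊤) ∧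
      (∀ i, W i ⊓ (⨆ j ∈ ({i}ᶜ : Set (Fin n)), W j) = ⊥) ∧
      (∀ i, W i ≠ ⊥ ∧
        ∀ N : LieSubmodule ℂ (sl (Fin 2) ℂ) V, N ≤ W i → N = ⊥ ∨ N = W i) := by
  obtain ⟨n, W, hsup, hind, hatoms⟩ :=
    exists_fin_isAtom_iSupIndep_iSup_eq_top (α := LieSubmodule ℂ (sl (Fin 2) ℂ) V)
  refine ⟨n, W, hsup, fun i ↦ (hind i).eq_bot, fun i ↦ ⟨(hatoms i).1, fun N hN ↦ ?_⟩⟩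
  exact (eq_or_lt_of_le hN).symm.imp ((hatoms i).2 N) id
end

section
/- If α and β are roots of a root system with β ≠ ±α, and E_α, F_α, H_α is the sl₂-triple for α acting on V = ⊕_{m∈ℤ} 𝔤_{β+mα}, then the set of integers m for which β + mα is a root forms an unbroken interval [−p, q] with p, q ≥ 0 and p − q = 2(α,β)/(α,α); in particular 2(α,β)/(α,α) ∈ ℤ and β − (2(α,β)/(α,α))α is a root. -/
/-! If roots `γ ≠ -δ` make an obtuse angle, then `γ + δ` is a root: they are not proportional, so by
strict Cauchy–Schwarz their two Cartan integers are negative with product `< 4`, hence one of them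
is `-1` and the corresponding reflection produces `γ + δ`. Along the string `β + mα` the function
`m ↦ ⟪β + mα, α⟫` is therefore `≥ 0` where a run of roots ends and `≤ 0` where the next run starts;
as it is strictly increasing, the string has no gaps. Finally the reflection in `α` sends
`β + mα` to `β - (n + m)α`, reversing the string `[-p, q]`, which forces `p - q = n`. -/

open Set
open scoped RealInnerProductSpace

theorem real_inner_mul_inner_self_lt {F : Type*} [NormedAddCommGroup F] [InnerProductSpace ℝ F]
    {x y : F} (hy : y ≠ 0) (h : ∀ t : ℝ, x ≠ t • y) :
    ⟪x, y⟫ * ⟪x, y⟫ < ⟪x, x⟫ * ⟪y, y⟫ := by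
  have hlt : |⟪y, x⟫| < ‖y‖ * ‖x‖ := by
    refine (abs_real_inner_le_norm y x).lt_of_ne fun heq => ?_
    obtain hy0 | ⟨t, rfl⟩ := ((norm_inner_eq_norm_tfae ℝ y x).out 0 2).1 heq
    · exact hy hy0
    · exact h t rfl
  rw [real_inner_comm] at hlt
  rw [real_inner_self_eq_norm_mul_norm, real_inner_self_eq_norm_mul_norm, ← abs_mul_abs_self]
  nlinarith [abs_nonneg ⟪x, y⟫]

theorem Int.eq_neg_one_or_eq_neg_one_of_mul_lt_four {a b : ℤ} (ha : a < 0) (hb : b < 0)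
    (hab : a * b < 4) : a = -1 ∨ b = -1 := by
  by_contra! h
  nlinarith [show a ≤ -2 by omega, show b ≤ -2 by omega]

section RootSet

variable {V : Type*} [NormedAddCommGroup V] [InnerProductSpace ℝ V] {Φ : Set V} {α β γ δ : V}

noncomputable def cartanNumber (α β : V) : ℝ := 2 * ⟪α, β⟫ / ⟪α, α⟫

def IsReflectionClosed (Φ : Set V) : Prop := ∀ α ∈ Φ, ∀ β ∈ Φ, β - cartanNumber α β • α ∈ Φ

def HasIntegralCartanNumbers (Φ : Set V) : Prop :=
  ∀ α ∈ Φ, ∀ β ∈ Φ, ∃ n : ℤ, (n : ℝ) = cartanNumber α β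

def HasOnlyUnitMultiples (Φ : Set V) : Prop := ∀ α ∈ Φ, ∀ t : ℝ, t • α ∈ Φ → t = 1 ∨ t = -1

lemma cartanNumber_self (hα : α ≠ 0) : cartanNumber α α = 2 := by
  rw [cartanNumber, mul_div_assoc, div_self (real_inner_self_pos.2 hα).ne', mul_one]

lemma cartanNumber_add_smul_self (hα : α ≠ 0) (t : ℝ) :
    cartanNumber α (β + t • α) = cartanNumber α β + 2 * t := by
  have := (real_inner_self_pos.2 hα).ne'
  simp only [cartanNumber, inner_add_right, real_inner_smul_right]
  field_simp

lemma cartanNumber_neg_of_inner_neg (h : ⟪α, β⟫ < 0) : cartanNumber α β < 0 := by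
  have hα : α ≠ 0 := by rintro rfl; simp at h
  exact div_neg_of_neg_of_pos (by linarith) (real_inner_self_pos.2 hα)

lemma cartanNumber_mul_cartanNumber_lt_four (hδ : δ ≠ 0) (h : ∀ t : ℝ, γ ≠ t • δ) :
    cartanNumber γ δ * cartanNumber δ γ < 4 := by
  have hγ : γ ≠ 0 := by simpa using h 0
  have hcs := real_inner_mul_inner_self_lt hδ h
  have hpos := mul_pos (real_inner_self_pos.2 hγ) (real_inner_self_pos.2 hδ)
  rw [cartanNumber, cartanNumber, real_inner_comm γ δ, div_mul_div_comm, div_lt_iff₀ hpos]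
  linarith

lemma IsReflectionClosed.neg_mem (hrefl : IsReflectionClosed Φ) (hγ : γ ∈ Φ) (hγ0 : γ ≠ 0) :
    -γ ∈ Φ := by
  have h := hrefl γ hγ γ hγ
  rwa [cartanNumber_self hγ0, two_smul, sub_add_cancel_left] at h

lemma HasOnlyUnitMultiples.ne_smul (hred : HasOnlyUnitMultiples Φ) (hγ : γ ∈ Φ) (hδ : δ ∈ Φ)
    (h₁ : γ ≠ δ) (h₂ : γ ≠ -δ) (t : ℝ) : γ ≠ t • δ := by
  rintro rfl
  rcases hred δ hδ t hγ with rfl | rfl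
  · exact h₁ (one_smul ℝ δ)
  · exact h₂ (neg_one_smul ℝ δ)

lemma add_mem_of_inner_neg (h0 : (0 : V) ∉ Φ) (hrefl : IsReflectionClosed Φ)
    (hint : HasIntegralCartanNumbers Φ) (hred : HasOnlyUnitMultiples Φ) (hγ : γ ∈ Φ) (hδ : δ ∈ Φ)
    (hneg : ⟪γ, δ⟫ < 0) (hne : γ ≠ -δ) : γ + δ ∈ Φ := by
  have hγδ : γ ≠ δ := by rintro rfl; exact real_inner_self_nonneg.not_gt hneg
  obtain ⟨a, ha⟩ := hint γ hγ δ hδ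
  obtain ⟨b, hb⟩ := hint δ hδ γ hγ
  have hab : a * b < 4 := by
    have := cartanNumber_mul_cartanNumber_lt_four (ne_of_mem_of_not_mem hδ h0)
      (hred.ne_smul hγ hδ hγδ hne)
    rw [← ha, ← hb] at this
    exact_mod_cast this
  have ha0 : a < 0 := by exact_mod_cast ha ▸ cartanNumber_neg_of_inner_neg hneg
  have hb0 : b < 0 := by
    exact_mod_cast hb ▸ cartanNumber_neg_of_inner_neg (real_inner_comm γ δ ▸ hneg)
  rcases Int.eq_neg_one_or_eq_neg_one_of_mul_lt_four ha0 hb0 hab with rfl | rfl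
  · simpa [← ha, add_comm] using hrefl γ hγ δ hδ
  · simpa [← hb] using hrefl δ hδ γ hγ

def rootString (Φ : Set V) (α β : V) : Set ℤ := {m | β + (m : ℝ) • α ∈ Φ}

lemma zero_mem_rootString (hβ : β ∈ Φ) : 0 ∈ rootString Φ α β := by
  simpa [rootString] using hβ

lemma rootString_finite (hfin : Φ.Finite) (hα : α ≠ 0) : (rootString Φ α β).Finite :=
  hfin.preimage ((add_right_injective β).comp
    ((smul_left_injective ℝ hα).comp Int.cast_injective)).injOn

lemma neg_sub_mem_rootString (hrefl : IsReflectionClosed Φ) (hα : α ∈ Φ) (hα0 : α ≠ 0) {n m : ℤ}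
    (hn : (n : ℝ) = cartanNumber α β) (hm : m ∈ rootString Φ α β) :
    -n - m ∈ rootString Φ α β := by
  have h := hrefl α hα _ hm
  rw [cartanNumber_add_smul_self hα0, ← hn] at h
  simp only [rootString, mem_ofPred_eq, Int.cast_sub, Int.cast_neg]
  convert h using 1
  module

lemma inner_add_smul_nonneg_of_succ_notMem (h0 : (0 : V) ∉ Φ) (hrefl : IsReflectionClosed Φ)
    (hint : HasIntegralCartanNumbers Φ) (hred : HasOnlyUnitMultiples Φ) (hα : α ∈ Φ)
    (hβα : ∀ t : ℝ, β ≠ t • α) {r : ℤ} (hr : r ∈ rootString Φ α β)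
    (hr1 : r + 1 ∉ rootString Φ α β) :
    0 ≤ ⟪β + (r : ℝ) • α, α⟫ := by
  by_contra! hneg
  refine hr1 ?_
  have hne : β + (r : ℝ) • α ≠ -α := fun h => hβα (-r - 1) (by rw [eq_sub_of_add_eq h]; module)
  have h := add_mem_of_inner_neg h0 hrefl hint hred hr hα hneg hne
  simp only [rootString, mem_ofPred_eq, Int.cast_add, Int.cast_one]
  convert h using 1
  module

lemma inner_add_smul_nonpos_of_pred_notMem (h0 : (0 : V) ∉ Φ) (hrefl : IsReflectionClosed Φ)
    (hint : HasIntegralCartanNumbers Φ) (hred : HasOnlyUnitMultiples Φ) (hα : α ∈ Φ)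
    (hβα : ∀ t : ℝ, β ≠ t • α) {s : ℤ} (hs : s ∈ rootString Φ α β)
    (hs1 : s - 1 ∉ rootString Φ α β) :
    ⟪β + (s : ℝ) • α, α⟫ ≤ 0 := by
  by_contra! hpos
  refine hs1 ?_
  have hneg : ⟪β + (s : ℝ) • α, -α⟫ < 0 := by rwa [inner_neg_right, neg_lt_zero]
  have hne : β + (s : ℝ) • α ≠ -(-α) := fun h => hβα (1 - s) (by
    rw [neg_neg] at h; rw [eq_sub_of_add_eq h]; module)
  have hα0 := ne_of_mem_of_not_mem hα h0
  have h := add_mem_of_inner_neg h0 hrefl hint hred hs (hrefl.neg_mem hα hα0) hneg hne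
  simp only [rootString, mem_ofPred_eq, Int.cast_sub, Int.cast_one]
  convert h using 1
  module

lemma rootString_eq_Icc (hfin : Φ.Finite) (h0 : (0 : V) ∉ Φ) (hrefl : IsReflectionClosed Φ)
    (hint : HasIntegralCartanNumbers Φ) (hred : HasOnlyUnitMultiples Φ) (hα : α ∈ Φ)
    (hβ : β ∈ Φ) (hβα : ∀ t : ℝ, β ≠ t • α) :
    rootString Φ α β = Icc (sInf (rootString Φ α β)) (sSup (rootString Φ α β)) := by
  have hα0 := ne_of_mem_of_not_mem hα h0
  have hfinS := rootString_finite (β := β) hfin hα0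
  refine (Set.Nonempty.eq_Icc_iff_int ⟨0, zero_mem_rootString hβ⟩ hfinS.bddBelow
    hfinS.bddAbove).2 fun r hr s hs hgap => ?_
  by_contra! hlt
  have hr1 : r + 1 ∉ rootString Φ α β := hgap.notMem_of_mem_left ⟨by omega, by omega⟩
  have hs1 : s - 1 ∉ rootString Φ α β := hgap.notMem_of_mem_left ⟨by omega, by omega⟩
  have hr_nonneg := inner_add_smul_nonneg_of_succ_notMem h0 hrefl hint hred hα hβα hr hr1
  have hs_nonpos := inner_add_smul_nonpos_of_pred_notMem h0 hrefl hint hred hα hβα hs hs1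
  have hαα := real_inner_self_pos.2 hα0
  have hrs : (r : ℝ) < s := by exact_mod_cast (by omega : r < s)
  simp only [inner_add_left, real_inner_smul_left] at hr_nonneg hs_nonpos
  nlinarith

end RootSet

theorem Int.exists_eq_Icc_of_zero_mem_of_neg_sub_mem {S : Set ℤ} {a b c : ℤ} (hS : S = Icc a b)
    (h0 : 0 ∈ S) (hsymm : ∀ m ∈ S, -c - m ∈ S) :
    ∃ p q : ℕ, S = Icc (-(p : ℤ)) q ∧ (p : ℤ) - q = c := by
  subst hS
  have ha := hsymm a ⟨le_rfl, h0.1.trans h0.2⟩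
  have hb := hsymm b ⟨h0.1.trans h0.2, le_rfl⟩
  simp only [mem_Icc] at h0 ha hb
  refine ⟨(-a).toNat, b.toNat, ?_, by omega⟩
  congr <;> omega

theorem stmt_15_general {V : Type*} [NormedAddCommGroup V] [InnerProductSpace ℝ V]
    (Φ : Set V) (hfin : Φ.Finite) (h0 : (0 : V) ∉ Φ)
    (hrefl : ∀ α ∈ Φ, ∀ β ∈ Φ,
      β - (2 * (inner ℝ α β : ℝ) / (inner ℝ α α : ℝ)) • α ∈ Φ)
    (hint : ∀ α ∈ Φ, ∀ β ∈ Φ, ∃ n : ℤ, (n : ℝ) = 2 * (inner ℝ α β : ℝ) / (inner ℝ α α : ℝ))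
    (hred : ∀ α ∈ Φ, ∀ t : ℝ, t • α ∈ Φ → t = 1 ∨ t = -1)
    (α β : V) (hα : α ∈ Φ) (hβ : β ∈ Φ) (hβα : β ≠ α) (hβα' : β ≠ -α) :
    ∃ n : ℤ, (n : ℝ) = 2 * (inner ℝ α β : ℝ) / (inner ℝ α α : ℝ) ∧
      (∃ p q : ℕ, {m : ℤ | β + (m : ℝ) • α ∈ Φ} = Set.Icc (-(p : ℤ)) (q : ℤ) ∧
        (p : ℤ) - q = n) ∧
      β - (n : ℝ) • α ∈ Φ := by
  obtain ⟨n, hn⟩ := hint α hα β hβ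
  have hS := rootString_eq_Icc hfin h0 hrefl hint hred hα hβ
    (HasOnlyUnitMultiples.ne_smul hred hβ hα hβα hβα')
  refine ⟨n, hn, Int.exists_eq_Icc_of_zero_mem_of_neg_sub_mem hS (zero_mem_rootString hβ)
    fun m hm => neg_sub_mem_rootString hrefl hα (ne_of_mem_of_not_mem hα h0) hn hm, ?_⟩
  rw [hn]
  exact hrefl α hα β hβ

/-- (Root strings) If `α` and `β` are roots of a root system with `β ≠ ±α`, then the set
of integers `m` for which `β + mα` is a root forms an unbroken interval `[−p, q]` with
`p, q ≥ 0` and `p − q = 2(α,β)/(α,α)`; in particular `2(α,β)/(α,α) ∈ ℤ` and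
`β − (2(α,β)/(α,α))α` is a root. -/
theorem stmt_15 {V : Type*} [NormedAddCommGroup V] [InnerProductSpace ℝ V]
    [FiniteDimensional ℝ V]
    (Φ : Set V) (hfin : Φ.Finite) (h0 : (0 : V) ∉ Φ)
    (hspan : Submodule.span ℝ Φ = ⊤)
    (hrefl : ∀ α ∈ Φ, ∀ β ∈ Φ,
      β - (2 * (inner ℝ α β : ℝ) / (inner ℝ α α : ℝ)) • α ∈ Φ)
    (hint : ∀ α ∈ Φ, ∀ β ∈ Φ, ∃ n : ℤ, (n : ℝ) = 2 * (inner ℝ α β : ℝ) / (inner ℝ α α : ℝ))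
    (hred : ∀ α ∈ Φ, ∀ t : ℝ, t • α ∈ Φ → t = 1 ∨ t = -1)
    (α β : V) (hα : α ∈ Φ) (hβ : β ∈ Φ) (hβα : β ≠ α) (hβα' : β ≠ -α) :
    ∃ n : ℤ, (n : ℝ) = 2 * (inner ℝ α β : ℝ) / (inner ℝ α α : ℝ) ∧
      (∃ p q : ℕ, {m : ℤ | β + (m : ℝ) • α ∈ Φ} = Set.Icc (-(p : ℤ)) (q : ℤ) ∧
        (p : ℤ) - q = n) ∧
      β - (n : ℝ) • α ∈ Φ :=
  stmt_15_general Φ hfin h0 hrefl hint hred α β hα hβ hβα hβα'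
end

section
/- (Poincaré–Birkhoff–Witt) Let 𝔤 be a Lie algebra over a field with ordered basis X₁, X₂, …. Then the ordered monomials X_{i₁} X_{i₂} ⋯ X_{i_k} with i₁ ≤ i₂ ≤ ⋯ ≤ i_k form a basis of the universal enveloping algebra U(𝔤). -/
/-!
Spanning: `ι (X i) * ι (X j) = ι (X j) * ι (X i) + ι ⁅X i, X j⁆`, and the commutator term is a
monomial of lower length, so any product of generators can be reordered at the cost of shorter
products; by induction on the length, ordered monomials span.

Independence (Humphreys, §17.4): let `X i` act on the free module with basis the ordered monomials
`z_Σ`. When `i` is at most every index of `Σ` it sends `z_Σ` to `z_{iΣ}`; otherwise the relation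
above forces its value, recursively in the length of `Σ`. That this defines a representation of `L`
is proved by induction on the length: the "defect" `⁅ρ x, ρ y⁆ - ρ ⁅x, y⁆` satisfies a Jacobi-type
identity which moves the one hard case (`X i` and `X j` acting on `z_{kΣ}` with `k < i, j`) to
shorter monomials. Through `U(L)` this action sends the ordered monomial of `Σ` applied to `z_∅` to
`z_Σ`, so ordered monomials are linearly independent.
-/

namespace PBW

attribute [local instance] LieRing.ofAssociativeRing

section Linear

variable {K : Type*} [CommRing K] {α N : Type*} [AddCommGroup N] [Module K N]

lemma linearCombination_mem {f : α → N} {p : Submodule K N} {v : α →₀ K}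
    (h : ∀ a ∈ v.support, f a ∈ p) :
    Finsupp.linearCombination K f v ∈ p := by
  rw [Finsupp.linearCombination_apply]
  exact Submodule.sum_mem _ fun a ha => Submodule.smul_mem _ _ (h a ha)

lemma linearCombination_congr {f g : α → N} {v : α →₀ K} (h : ∀ a ∈ v.support, f a = g a) :
    Finsupp.linearCombination K f v = Finsupp.linearCombination K g v := by
  simp only [Finsupp.linearCombination_apply]
  exact Finsupp.sum_congr fun a ha => by rw [h a ha]

lemma apply_mem_of_basis {ι M : Type*} [AddCommGroup M] [Module K M] (b : Module.Basis ι K M)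
    (f : M →ₗ[K] N) {p : Submodule K N} (h : ∀ i, f (b i) ∈ p) (x : M) : f x ∈ p := by
  have : Submodule.span K (Set.range b) ≤ p.comap f :=
    Submodule.span_le.2 (Set.range_subset_iff.2 h)
  exact this (b.span_eq ▸ Submodule.mem_top)

end Linear

section Defect

variable {K : Type*} [CommRing K] {L : Type*} [LieRing L] [LieAlgebra K L]
  {M : Type*} [AddCommGroup M] [Module K M] (ρ : L →ₗ[K] Module.End K M)

def bracketDefect : L →ₗ[K] L →ₗ[K] Module.End K M :=
  LinearMap.mk₂ K (fun x y => ⁅ρ x, ρ y⁆ - ρ ⁅x, y⁆)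
    (fun _ _ _ => by simp only [map_add, add_lie]; abel)
    (fun _ _ _ => by simp only [map_smul, smul_lie, smul_sub])
    (fun _ _ _ => by simp only [map_add, lie_add]; abel)
    (fun _ _ _ => by simp only [map_smul, lie_smul, smul_sub])

lemma bracketDefect_apply (x y : L) : bracketDefect ρ x y = ⁅ρ x, ρ y⁆ - ρ ⁅x, y⁆ := rfl

lemma bracketDefect_apply_apply (x y : L) (v : M) :
    bracketDefect ρ x y v = ρ x (ρ y v) - ρ y (ρ x v) - ρ ⁅x, y⁆ v := by
  simp [bracketDefect_apply, Ring.lie_def]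

lemma bracketDefect_swap (x y : L) : bracketDefect ρ y x = -bracketDefect ρ x y := by
  rw [bracketDefect_apply, bracketDefect_apply, ← lie_skew x y, ← lie_skew (ρ x) (ρ y), map_neg]
  abel

lemma lie_bracketDefect (x y z : L) :
    ⁅bracketDefect ρ x y, ρ z⁆ = ⁅ρ x, bracketDefect ρ y z⁆ - ⁅ρ y, bracketDefect ρ x z⁆
      + bracketDefect ρ x ⁅y, z⁆ - bracketDefect ρ y ⁅x, z⁆ - bracketDefect ρ ⁅x, y⁆ z := by
  have jacobi : ρ ⁅x, ⁅y, z⁆⁆ = ρ ⁅⁅x, y⁆, z⁆ + ρ ⁅y, ⁅x, z⁆⁆ := by rw [leibniz_lie, map_add]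
  simp only [bracketDefect_apply, Ring.lie_def, jacobi]
  noncomm_ring

def kerBracketDefect : Submodule K M := ⨅ x, ⨅ y, LinearMap.ker (bracketDefect ρ x y)

lemma mem_kerBracketDefect {v : M} :
    v ∈ kerBracketDefect ρ ↔ ∀ x y, bracketDefect ρ x y v = 0 := by
  simp [kerBracketDefect, Submodule.mem_iInf]

lemma mem_kerBracketDefect_of_basis {B : Type*} (X : Module.Basis B K L) {v : M}
    (h : ∀ i j, bracketDefect ρ (X i) (X j) v = 0) : v ∈ kerBracketDefect ρ := by
  have : (bracketDefect ρ).compr₂ (LinearMap.applyₗ v) = 0 :=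
    LinearMap.ext_basis X X fun i j => h i j
  exact (mem_kerBracketDefect ρ).2 fun x y => LinearMap.congr_fun₂ this x y

lemma bracketDefect_apply_rep_eq_zero {v : M} (hv : v ∈ kerBracketDefect ρ) {x y z : L}
    (hx : bracketDefect ρ y z (ρ x v) = 0) (hy : bracketDefect ρ x z (ρ y v) = 0) :
    bracketDefect ρ x y (ρ z v) = 0 := by
  have := LinearMap.congr_fun (lie_bracketDefect ρ x y z) v
  simp only [Ring.lie_def, LinearMap.sub_apply, LinearMap.add_apply, Module.End.mul_apply,
    (mem_kerBracketDefect ρ).1 hv, hx, hy, map_zero, sub_zero, add_zero] at this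
  exact this

def toLieHom (h : kerBracketDefect ρ = ⊤) : L →ₗ⁅K⁆ Module.End K M :=
  { ρ with
    map_lie' := fun {x y} => LinearMap.ext fun v => by
      have := (mem_kerBracketDefect ρ).1 (h ▸ Submodule.mem_top : v ∈ kerBracketDefect ρ) x y
      rwa [bracketDefect_apply, LinearMap.sub_apply, sub_eq_zero, eq_comm] at this }

lemma toLieHom_apply (h : kerBracketDefect ρ = ⊤) (x : L) : toLieHom ρ h x = ρ x := rfl

end Defect

section SortedList

variable {B : Type*} [LinearOrder B]

abbrev SortedList (B : Type*) [LinearOrder B] := {l : List B // l.Pairwise (· ≤ ·)}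

def ins (i : B) (l : List B) : List B := l.orderedInsert (· ≤ ·) i

lemma length_ins (i : B) (l : List B) : (ins i l).length = l.length + 1 :=
  List.orderedInsert_length _ _ _

lemma sorted_ins {l : List B} (i : B) (h : l.Pairwise (· ≤ ·)) : (ins i l).Pairwise (· ≤ ·) :=
  h.orderedInsert i l

lemma ins_cons_of_le {i j : B} (t : List B) (h : i ≤ j) : ins i (j :: t) = i :: j :: t := by
  simp [ins, h]

lemma ins_cons_of_not_le {i j : B} (t : List B) (h : ¬ i ≤ j) :
    ins i (j :: t) = j :: ins i t := by
  simp [ins, h]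

lemma sorted_cons_ins {i j : B} {t : List B} (hs : (j :: t).Pairwise (· ≤ ·)) (h : j ≤ i) :
    (j :: ins i t).Pairwise (· ≤ ·) := by
  rw [List.pairwise_cons] at hs ⊢
  refine ⟨fun b hb => ?_, sorted_ins i hs.2⟩
  rcases (List.mem_orderedInsert _).mp hb with rfl | hb
  exacts [h, hs.1 b hb]

end SortedList

section Poly

variable {B : Type*} [LinearOrder B] {K : Type*} [CommRing K]

/-- Sorted lists stand for the monomials `z_Σ` of the polynomial ring `K[z_b | b ∈ B]`. -/
abbrev Poly (K B : Type*) [CommRing K] [LinearOrder B] : Type _ := SortedList B →₀ K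

noncomputable def z (l : List B) : Poly K B :=
  if h : l.Pairwise (· ≤ ·) then Finsupp.single ⟨l, h⟩ 1 else 0

lemma z_of_sorted {l : List B} (h : l.Pairwise (· ≤ ·)) :
    (z l : Poly K B) = Finsupp.single ⟨l, h⟩ 1 := dif_pos h

def degreeLE (K B : Type*) [CommRing K] [LinearOrder B] (k : ℕ) : Submodule K (Poly K B) :=
  Finsupp.supported K K {ν : SortedList B | ν.1.length ≤ k}

lemma degreeLE_mono {k k' : ℕ} (h : k ≤ k') : degreeLE K B k ≤ degreeLE K B k' :=
  Finsupp.supported_mono fun _ hν => le_trans hν h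

lemma z_mem_degreeLE {k : ℕ} {l : List B} (h : l.length ≤ k) :
    (z l : Poly K B) ∈ degreeLE K B k := by
  unfold z
  split
  · exact Finsupp.single_mem_supported K 1 h
  · exact zero_mem _

lemma degreeLE_le {k : ℕ} {p : Submodule K (Poly K B)}
    (h : ∀ ν : SortedList B, ν.1.length ≤ k → z ν.1 ∈ p) : degreeLE K B k ≤ p := by
  rw [degreeLE, Finsupp.supported_eq_span_single, Submodule.span_le]
  rintro _ ⟨ν, hν, rfl⟩
  simpa [z_of_sorted ν.2] using h ν hν

end Poly

section Action

variable {B : Type*} [LinearOrder B] {K : Type*} [CommRing K]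
variable {L : Type*} [LieRing L] [LieAlgebra K L] (X : Module.Basis B K L)

/-- The action of `X i` on `z_l`, with fuel `n`; correct once `l.length < n`. For `j < i`,
`X i z_{j :: t}` is forced to be `X j (X i z_t) + ⁅X i, X j⁆ z_t`, and `X i z_t ≡ z_{ins i t}`
modulo shorter monomials, on which `X j` is already defined. -/
noncomputable def actAux : ℕ → B → List B → Poly K B
  | 0, _, _ => 0
  | _ + 1, i, [] => z [i]
  | n + 1, i, j :: t =>
    if i ≤ j then z (i :: j :: t)
    else z (j :: ins i t)
      + Finsupp.linearCombination K (fun ν => actAux n j ν.1) (actAux n i t - z (ins i t))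
      + Finsupp.linearCombination K (fun b => actAux n b t) (X.repr ⁅X i, X j⁆)

lemma mem_degreeLE_succ_of_sub_z_mem {v : Poly K B} {i : B} {l : List B}
    (h : v - z (ins i l) ∈ degreeLE K B l.length) : v ∈ degreeLE K B (l.length + 1) := by
  simpa using add_mem (degreeLE_mono l.length.le_succ h) (z_mem_degreeLE (length_ins i l).le)

lemma actAux_sub_z_mem (n : ℕ) : ∀ (i : B) (l : List B), l.Pairwise (· ≤ ·) → l.length < n →
    actAux X n i l - z (ins i l) ∈ degreeLE K B l.length := by
  induction n with
  | zero => intro i l _ h; omega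
  | succ n ih =>
    rintro i (_ | ⟨j, t⟩) hs hl
    · simp [actAux, ins]
    have ht : t.Pairwise (· ≤ ·) := hs.of_cons
    have htl : t.length < n := by simpa using hl
    by_cases hij : i ≤ j
    · simp [actAux, hij, ins_cons_of_le t hij]
    rw [actAux, if_neg hij, ins_cons_of_not_le t hij, add_assoc, add_sub_cancel_left]
    refine add_mem ?_ ?_
    · refine linearCombination_mem fun ν hν => ?_
      have hν : ν.1.length ≤ t.length := ih i t ht htl hν
      exact degreeLE_mono (by simpa using hν)
        (mem_degreeLE_succ_of_sub_z_mem (ih j ν.1 ν.2 (by omega)))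
    · exact linearCombination_mem fun b _ => mem_degreeLE_succ_of_sub_z_mem (ih b t ht htl)

lemma actAux_succ (n : ℕ) : ∀ (i : B) (l : List B), l.Pairwise (· ≤ ·) → l.length < n →
    actAux X (n + 1) i l = actAux X n i l := by
  induction n with
  | zero => intro i l _ h; omega
  | succ n ih =>
    rintro i (_ | ⟨j, t⟩) hs hl
    · rfl
    have ht : t.Pairwise (· ≤ ·) := hs.of_cons
    have htl : t.length < n := by simpa using hl
    by_cases hij : i ≤ j
    · simp only [actAux, if_pos hij]
    simp only [actAux, if_neg hij]
    rw [ih i t ht htl]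
    congr 2
    · refine linearCombination_congr fun ν hν => ?_
      have hν : ν.1.length ≤ t.length := actAux_sub_z_mem X n i t ht htl hν
      exact ih j ν.1 ν.2 (by omega)
    · exact congrArg _ (funext fun b => ih b t ht htl)

noncomputable def act (i : B) (l : List B) : Poly K B := actAux X (l.length + 1) i l

lemma actAux_eq_act {n : ℕ} {i : B} {l : List B} (hs : l.Pairwise (· ≤ ·)) (h : l.length < n) :
    actAux X n i l = act X i l := by
  induction n, h using Nat.le_induction with
  | base => rfl
  | succ n hn ih => rw [actAux_succ X n i l hs hn, ih]

lemma act_sub_z_mem {i : B} {l : List B} (hs : l.Pairwise (· ≤ ·)) :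
    act X i l - z (ins i l) ∈ degreeLE K B l.length :=
  actAux_sub_z_mem X _ i l hs l.length.lt_succ_self

lemma act_of_sorted {i : B} {l : List B} (hs : (i :: l).Pairwise (· ≤ ·)) :
    act X i l = z (i :: l) := by
  rcases l with _ | ⟨j, t⟩
  · rfl
  · simp [act, actAux, (List.pairwise_cons.mp hs).1 j (by simp)]

lemma act_cons_of_not_le {i j : B} {t : List B} (hs : (j :: t).Pairwise (· ≤ ·)) (h : ¬ i ≤ j) :
    act X i (j :: t) = z (j :: ins i t)
      + Finsupp.linearCombination K (fun ν => act X j ν.1) (act X i t - z (ins i t))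
      + Finsupp.linearCombination K (fun b => act X b t) (X.repr ⁅X i, X j⁆) := by
  have ht : t.Pairwise (· ≤ ·) := hs.of_cons
  rw [act, List.length_cons, actAux, if_neg h, actAux_eq_act X ht (by omega)]
  congr 2
  refine linearCombination_congr fun ν hν => actAux_eq_act X ν.2 ?_
  have hν : ν.1.length ≤ t.length := act_sub_z_mem X ht hν
  omega

noncomputable def rep : L →ₗ[K] Module.End K (Poly K B) :=
  X.constr K fun i => Finsupp.linearCombination K fun ν => act X i ν.1

lemma rep_basis_apply (i : B) (v : Poly K B) :
    rep X (X i) v = Finsupp.linearCombination K (fun ν => act X i ν.1) v := by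
  rw [rep, X.constr_basis]

lemma rep_basis_z {i : B} {l : List B} (hs : l.Pairwise (· ≤ ·)) :
    rep X (X i) (z l) = act X i l := by
  rw [rep_basis_apply, z_of_sorted hs, Finsupp.linearCombination_single, one_smul]

lemma rep_z {l : List B} (hs : l.Pairwise (· ≤ ·)) (y : L) :
    rep X y (z l) = Finsupp.linearCombination K (fun b => act X b l) (X.repr y) := by
  have : LinearMap.applyₗ (z l) ∘ₗ rep X =
      Finsupp.linearCombination K (fun b => act X b l) ∘ₗ X.repr.toLinearMap :=
    X.ext fun i => by simp [rep_basis_z X hs]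
  exact LinearMap.congr_fun this y

lemma act_cons_of_lt {i j : B} {t : List B} (hs : (j :: t).Pairwise (· ≤ ·)) (h : j < i) :
    act X i (j :: t) = rep X (X j) (act X i t) + rep X ⁅X i, X j⁆ (z t) := by
  have ht : t.Pairwise (· ≤ ·) := hs.of_cons
  have split : act X i t = z (ins i t) + (act X i t - z (ins i t)) := by abel
  rw [act_cons_of_not_le X hs h.not_ge, rep_z X ht, split, map_add,
    rep_basis_z X (sorted_ins i ht), act_of_sorted X (sorted_cons_ins hs h.le), rep_basis_apply,
    add_sub_cancel_left]

lemma bracketDefect_rep_basis_z {i j : B} {t : List B} (hs : (j :: t).Pairwise (· ≤ ·)) :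
    bracketDefect (rep X) (X i) (X j) (z t) = 0 := by
  have key : ∀ {i j : B}, (j :: t).Pairwise (· ≤ ·) → j < i →
      bracketDefect (rep X) (X i) (X j) (z t) = 0 := fun {i j} hs h => by
    have ht : t.Pairwise (· ≤ ·) := hs.of_cons
    rw [bracketDefect_apply_apply, rep_basis_z X ht, rep_basis_z X ht,
      act_of_sorted X hs, rep_basis_z X hs, act_cons_of_lt X hs h]
    abel
  rcases lt_trichotomy i j with h | rfl | h
  · have hs' : (i :: t).Pairwise (· ≤ ·) := (hs.cons_cons_of_trans h.le).sublist (by simp)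
    rw [bracketDefect_swap, LinearMap.neg_apply, key hs' h, neg_zero]
  · simp [bracketDefect_apply]
  · exact key hs h

lemma bracketDefect_rep_basis_rep_basis_z {a b k : B} {u : List B}
    (hs : (k :: u).Pairwise (· ≤ ·)) (hu : degreeLE K B u.length ≤ kerBracketDefect (rep X))
    (hb : k ≤ b) : bracketDefect (rep X) (X a) (X k) (rep X (X b) (z u)) = 0 := by
  have hu' : u.Pairwise (· ≤ ·) := hs.of_cons
  have split : rep X (X b) (z u) = z (ins b u) + (act X b u - z (ins b u)) := by
    rw [rep_basis_z X hu']; abel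
  rw [split, map_add, bracketDefect_rep_basis_z X (sorted_cons_ins hs hb), zero_add]
  exact (mem_kerBracketDefect _).1 (hu (act_sub_z_mem X hu')) _ _

lemma z_mem_kerBracketDefect_of_shorter {t : List B} (hs : t.Pairwise (· ≤ ·))
    (h : ∀ ν : SortedList B, ν.1.length < t.length → z ν.1 ∈ kerBracketDefect (rep X)) :
    z t ∈ kerBracketDefect (rep X) := by
  refine mem_kerBracketDefect_of_basis _ X fun i j => ?_
  rcases t with _ | ⟨k, u⟩
  · exact bracketDefect_rep_basis_z X (List.pairwise_singleton _ j)
  by_cases hj : j ≤ k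
  · exact bracketDefect_rep_basis_z X (hs.cons_cons_of_trans hj)
  by_cases hi : i ≤ k
  · rw [bracketDefect_swap, LinearMap.neg_apply,
      bracketDefect_rep_basis_z X (hs.cons_cons_of_trans hi), neg_zero]
  have hu : degreeLE K B u.length ≤ kerBracketDefect (rep X) :=
    degreeLE_le fun ν hν => h ν (by simp only [List.length_cons]; omega)
  -- Now `k < i, j`: write `z (k :: u) = X k • z u` and use the Jacobi identity for the defect.
  rw [← act_of_sorted X hs, ← rep_basis_z X hs.of_cons]
  exact bracketDefect_apply_rep_eq_zero _ (hu (z_mem_degreeLE le_rfl))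
    (bracketDefect_rep_basis_rep_basis_z X hs hu (not_le.1 hi).le)
    (bracketDefect_rep_basis_rep_basis_z X hs hu (not_le.1 hj).le)

theorem z_mem_kerBracketDefect : ∀ ν : SortedList B, z ν.1 ∈ kerBracketDefect (rep X)
  | ⟨_, hs⟩ => z_mem_kerBracketDefect_of_shorter X hs fun ν _ => z_mem_kerBracketDefect ν
termination_by ν => ν.1.length

theorem kerBracketDefect_rep_eq_top : kerBracketDefect (rep X) = ⊤ := by
  rw [eq_top_iff, ← Finsupp.supported_univ, Finsupp.supported_eq_span_single, Submodule.span_le]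
  rintro _ ⟨ν, -, rfl⟩
  simpa [z_of_sorted ν.2] using z_mem_kerBracketDefect X ν

noncomputable def lieRep : L →ₗ⁅K⁆ Module.End K (Poly K B) :=
  toLieHom (rep X) (kerBracketDefect_rep_eq_top X)

end Action

open UniversalEnvelopingAlgebra

noncomputable def monomial {B K L : Type*} [CommRing K] [LieRing L] [LieAlgebra K L]
    (X : Module.Basis B K L) (l : List B) : UniversalEnvelopingAlgebra K L :=
  (l.map fun i => ι K (X i)).prod

lemma monomial_cons {B K L : Type*} [CommRing K] [LieRing L] [LieAlgebra K L]
    (X : Module.Basis B K L) (i : B) (t : List B) :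
    monomial X (i :: t) = ι K (X i) * monomial X t := by
  simp [monomial]

section Monomials

variable {B : Type*} [LinearOrder B] {K : Type*} [CommRing K]
variable {L : Type*} [LieRing L] [LieAlgebra K L]

lemma adjoin_range_ι :
    Algebra.adjoin K (Set.range (ι K : L → UniversalEnvelopingAlgebra K L)) = ⊤ := by
  have : Set.range (ι K : L → UniversalEnvelopingAlgebra K L) =
      mkAlgHom K L '' Set.range (TensorAlgebra.ι K (M := L)) := by
    rw [← Set.range_comp]; rfl
  rw [this, Algebra.adjoin_image, TensorAlgebra.adjoin_range_ι, Algebra.map_top,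
    AlgHom.range_eq_top]
  exact RingCon.mkₐ_surjective (α := K) _

variable (X : Module.Basis B K L)

lemma lift_lieRep_monomial_z_nil {l : List B} (hs : l.Pairwise (· ≤ ·)) :
    lift K (lieRep X) (monomial X l) (z []) = z l := by
  induction l with
  | nil => simp [monomial]
  | cons i t ih =>
    rw [monomial_cons, map_mul, Module.End.mul_apply, ih hs.of_cons, lift_ι_apply, lieRep,
      toLieHom_apply, rep_basis_z X hs.of_cons, act_of_sorted X hs]

theorem linearIndependent_monomial :
    LinearIndependent K fun l : SortedList B => monomial X l.1 := by
  refine LinearIndependent.of_comp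
    (LinearMap.applyₗ (z []) ∘ₗ (lift K (lieRep X)).toLinearMap) ?_
  convert Finsupp.linearIndependent_single_one K (SortedList B) with l
  simp [lift_lieRep_monomial_z_nil X l.2, z_of_sorted l.2]

def monomialSpan (n : ℕ) : Submodule K (UniversalEnvelopingAlgebra K L) :=
  Submodule.span K (monomial X '' {l | l.Pairwise (· ≤ ·) ∧ l.length ≤ n})

lemma monomial_mem_monomialSpan {l : List B} (hs : l.Pairwise (· ≤ ·)) {n : ℕ}
    (h : l.length ≤ n) :
    monomial X l ∈ monomialSpan X n :=
  Submodule.subset_span ⟨l, ⟨hs, h⟩, rfl⟩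

lemma monomialSpan_mono {n m : ℕ} (h : n ≤ m) : monomialSpan X n ≤ monomialSpan X m :=
  Submodule.span_mono (Set.image_mono fun _ hl => ⟨hl.1, hl.2.trans h⟩)

lemma ι_mul_mem_monomialSpan_succ {n : ℕ}
    (h : ∀ (i : B) (l : List B), l.Pairwise (· ≤ ·) → l.length ≤ n →
      ι K (X i) * monomial X l - monomial X (ins i l) ∈ monomialSpan X n)
    (y : L) {v : UniversalEnvelopingAlgebra K L} (hv : v ∈ monomialSpan X n) :
    ι K y * v ∈ monomialSpan X (n + 1) := by
  suffices monomialSpan X n ≤ (monomialSpan X (n + 1)).comap (LinearMap.mulLeft K (ι K y)) from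
    this hv
  refine Submodule.span_le.2 ?_
  rintro _ ⟨l, ⟨hs, hl⟩, rfl⟩
  show (LinearMap.mulRight K (monomial X l) ∘ₗ (ι K).toLinearMap) y ∈ monomialSpan X (n + 1)
  refine apply_mem_of_basis X ((LinearMap.mulRight K (monomial X l)) ∘ₗ (ι K).toLinearMap)
    (fun i => ?_) y
  simpa using add_mem (monomialSpan_mono X n.le_succ (h i l hs hl))
    (monomial_mem_monomialSpan X (sorted_ins i hs) (by rw [length_ins]; omega))

theorem ι_mul_monomial_sub_mem (n : ℕ) : ∀ (i : B) (l : List B), l.Pairwise (· ≤ ·) →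
    l.length ≤ n → ι K (X i) * monomial X l - monomial X (ins i l) ∈ monomialSpan X n := by
  induction n with
  | zero =>
    rintro i _ - hl
    simp [List.length_eq_zero_iff.1 (Nat.le_zero.1 hl), monomial, ins]
  | succ n ih =>
    rintro i (_ | ⟨j, t⟩) hs hl
    · simp [monomial, ins]
    have ht : t.Pairwise (· ≤ ·) := hs.of_cons
    have htl : t.length ≤ n := by simpa using hl
    by_cases hij : i ≤ j
    · simp [ins_cons_of_le t hij, monomial_cons]
    have comm : ι K (X i) * ι K (X j) = ι K (X j) * ι K (X i) + ι K ⁅X i, X j⁆ := by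
      rw [LieHom.map_lie, Ring.lie_def]; abel
    have straighten : ι K (X i) * monomial X (j :: t) - monomial X (ins i (j :: t)) =
        ι K (X j) * (ι K (X i) * monomial X t - monomial X (ins i t))
          + ι K ⁅X i, X j⁆ * monomial X t := by
      rw [ins_cons_of_not_le t hij, monomial_cons, monomial_cons, ← mul_assoc, comm]
      noncomm_ring
    rw [straighten]
    exact add_mem (ι_mul_mem_monomialSpan_succ X ih _ (ih i t ht htl))
      (ι_mul_mem_monomialSpan_succ X ih _ (monomial_mem_monomialSpan X ht htl))

lemma monomialSpan_le_span (n : ℕ) :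
    monomialSpan X n ≤ Submodule.span K (Set.range fun l : SortedList B => monomial X l.1) :=
  Submodule.span_mono (by rintro _ ⟨l, ⟨hs, -⟩, rfl⟩; exact ⟨⟨l, hs⟩, rfl⟩)

theorem span_monomial_eq_top :
    Submodule.span K (Set.range fun l : SortedList B => monomial X l.1) = ⊤ := by
  set p := Submodule.span K (Set.range fun l : SortedList B => monomial X l.1)
  have hι : ∀ (y : L), ∀ v ∈ p, ι K y * v ∈ p := by
    intro y v hv
    suffices p ≤ p.comap (LinearMap.mulLeft K (ι K y)) from this hv
    refine Submodule.span_le.2 ?_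
    rintro _ ⟨⟨l, hs⟩, rfl⟩
    exact monomialSpan_le_span X _ (ι_mul_mem_monomialSpan_succ X
      (ι_mul_monomial_sub_mem X l.length) y (monomial_mem_monomialSpan X hs le_rfl))
  have hmul : ∀ u ∈ Algebra.adjoin K (Set.range (ι K : L → UniversalEnvelopingAlgebra K L)),
      ∀ v ∈ p, u * v ∈ p := by
    intro u hu
    induction hu using Algebra.adjoin_induction with
    | mem _ hx => obtain ⟨y, rfl⟩ := hx; exact hι y
    | algebraMap r => exact fun v hv => by rw [← Algebra.smul_def]; exact p.smul_mem r hv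
    | add a b _ _ ha hb => exact fun v hv => by rw [add_mul]; exact add_mem (ha v hv) (hb v hv)
    | mul a b _ _ ha hb => exact fun v hv => by rw [mul_assoc]; exact ha _ (hb v hv)
  refine eq_top_iff.2 fun u _ => ?_
  simpa [monomial] using hmul u (by rw [adjoin_range_ι]; trivial) (monomial X [])
    (Submodule.subset_span ⟨⟨[], List.Pairwise.nil⟩, rfl⟩)

end Monomials

end PBW

theorem stmt_18_general {K : Type*} [Field K] {L : Type*} [LieRing L]
    [LieAlgebra K L] {B : Type*} [LinearOrder B] (X : Module.Basis B K L) :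
    LinearIndependent K
      (fun l : {l : List B // l.Pairwise (· ≤ ·)} =>
        ((l : List B).map fun i => UniversalEnvelopingAlgebra.ι K (X i)).prod) ∧
    Submodule.span K
      (Set.range (fun l : {l : List B // l.Pairwise (· ≤ ·)} =>
        ((l : List B).map fun i => UniversalEnvelopingAlgebra.ι K (X i)).prod)) = ⊤ :=
  ⟨PBW.linearIndependent_monomial X, PBW.span_monomial_eq_top X⟩

/-- (Poincaré–Birkhoff–Witt) Let `𝔤` be a Lie algebra over a field with ordered basis
`X₁, X₂, …`. Then the ordered monomials `X_{i₁} X_{i₂} ⋯ X_{i_k}` with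
`i₁ ≤ i₂ ≤ ⋯ ≤ i_k` form a basis of the universal enveloping algebra `U(𝔤)`. -/
theorem stmt_18 {K : Type*} [Field K] [CharZero K] {L : Type*} [LieRing L]
    [LieAlgebra K L] {B : Type*} [LinearOrder B] (X : Module.Basis B K L) :
    LinearIndependent K
      (fun l : {l : List B // l.Pairwise (· ≤ ·)} =>
        ((l : List B).map fun i => UniversalEnvelopingAlgebra.ι K (X i)).prod) ∧
    Submodule.span K
      (Set.range (fun l : {l : List B // l.Pairwise (· ≤ ·)} =>
        ((l : List B).map fun i => UniversalEnvelopingAlgebra.ι K (X i)).prod)) = ⊤ :=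
  stmt_18_general X
end
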